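/- arXiv:1609.00794 — 4 statements merged into one kernel-verified Lean document; each statement's English description precedes it below -/
import Mathlib

section
/- The nonautonomous logistic equation u'(t) = u(t)(a(t) − b(t)u(t)) has exactly one entire solution u* : ℝ → ℝ that is bounded and satisfies inf_{t∈ℝ} u*(t) > 0; moreover this solution satisfies (inf_{t∈ℝ} a(t))/(sup_{t∈ℝ} b(t)) ≤ u*(t) ≤ (sup_{t∈ℝ} a(t))/(inf_{t∈ℝ} b(t)) for all t ∈ ℝ. -/
/-!
With `A` a primitive of `a`, the substitution `v = 1 / u` turns the logistic equation into the
linear equation `v' = b - a v`, whose only bounded entire solution is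
`v*(t) = ∫_{-∞}^t e^{A(s) - A(t)} b(s) ds`: the difference `d` of two bounded solutions has
`d e^A` constant, while `e^{A(t)} → 0` as `t → -∞` because `a ≥ inf a > 0`, so `d = 0`.
Comparing `b` with `a` inside the integral and using `∫_{-∞}^t a e^A = e^{A(t)}` gives
`inf b / sup a ≤ v* ≤ sup b / inf a`, and `u* = 1 / v*`.
-/

open Real Set Filter Topology MeasureTheory

theorem Real.iInf_le_of_iInf_pos {ι : Sort*} {f : ι → ℝ} (h : 0 < ⨅ i, f i) (i : ι) :
    ⨅ j, f j ≤ f i :=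
  ciInf_le (not_not.1 fun hf => (Real.iInf_of_not_bddBelow hf ▸ h).false) i

theorem hasDerivAt_integral_Iic {g : ℝ → ℝ} (hg : Continuous g)
    (hint : ∀ t, IntegrableOn g (Iic t)) (t : ℝ) :
    HasDerivAt (fun t => ∫ s in Iic t, g s) (g t) t := by
  have h : (fun t => ∫ s in Iic t, g s) =
      fun t => (∫ s in Iic 0, g s) + ∫ s in (0 : ℝ)..t, g s := by
    funext x
    rw [← intervalIntegral.integral_Iic_sub_Iic (hint 0) (hint x), add_sub_cancel]
  rw [h]
  exact (intervalIntegral.integral_hasDerivAt_right (hg.intervalIntegrable _ _)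
    (hg.stronglyMeasurableAtFilter _ _) hg.continuousAt).const_add _

namespace Logistic

noncomputable def primitive (a : ℝ → ℝ) (t : ℝ) : ℝ := ∫ s in (0 : ℝ)..t, a s

variable {a b : ℝ → ℝ} {α : ℝ}

theorem hasDerivAt_primitive (ha : Continuous a) (t : ℝ) :
    HasDerivAt (primitive a) (a t) t :=
  intervalIntegral.integral_hasDerivAt_right (ha.intervalIntegrable _ _)
    (ha.stronglyMeasurableAtFilter _ _) ha.continuousAt

theorem continuous_primitive (ha : Continuous a) : Continuous (primitive a) :=
  continuous_iff_continuousAt.2 fun t => (hasDerivAt_primitive ha t).continuousAt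

theorem primitive_le_mul_of_nonpos (ha : Continuous a) (hα : ∀ x, α ≤ a x) {t : ℝ}
    (ht : t ≤ 0) : primitive a t ≤ α * t := by
  have h := intervalIntegral.integral_mono_on (μ := volume) ht intervalIntegrable_const
    (ha.intervalIntegrable t 0) fun x _ => hα x
  rw [intervalIntegral.integral_const, smul_eq_mul] at h
  rw [primitive, intervalIntegral.integral_symm]
  linarith

theorem tendsto_exp_primitive_atBot (ha : Continuous a) (hα : ∀ x, α ≤ a x) (hαpos : 0 < α) :
    Tendsto (fun t => exp (primitive a t)) atBot (𝓝 0) := by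
  have h : Tendsto (fun t => exp (α * t)) atBot (𝓝 0) :=
    tendsto_exp_atBot.comp (tendsto_id.const_mul_atBot hαpos)
  refine squeeze_zero' (Eventually.of_forall fun t => (exp_pos _).le) ?_ h
  filter_upwards [eventually_le_atBot 0] with t ht
  exact exp_le_exp.2 (primitive_le_mul_of_nonpos ha hα ht)

theorem integrableOn_exp_primitive_mul (ha : Continuous a) (hα : ∀ x, α ≤ a x)
    (hαpos : 0 < α) (t : ℝ) :
    IntegrableOn (fun s => exp (primitive a s) * a s) (Iic t) := by
  have hcont : Continuous fun s => exp (primitive a s) * a s :=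
    (continuous_primitive ha).rexp.mul ha
  refine integrableOn_Iic_of_intervalIntegral_norm_bounded (exp (primitive a t)) t
    (fun _ => hcont.integrableOn_Ioc) tendsto_id ?_
  filter_upwards [eventually_le_atBot t] with x hx
  have hnorm : ∀ s, ‖exp (primitive a s) * a s‖ = exp (primitive a s) * a s := fun s =>
    norm_of_nonneg (mul_nonneg (exp_pos _).le (hαpos.le.trans (hα s)))
  simp only [id, hnorm]
  rw [intervalIntegral.integral_eq_sub_of_hasDerivAt
    (fun y _ => (hasDerivAt_primitive ha y).exp) (hcont.intervalIntegrable _ _)]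
  linarith [exp_pos (primitive a x)]

theorem integral_Iic_exp_primitive_mul (ha : Continuous a) (hα : ∀ x, α ≤ a x)
    (hαpos : 0 < α) (t : ℝ) :
    ∫ s in Iic t, exp (primitive a s) * a s = exp (primitive a t) := by
  rw [integral_Iic_of_hasDerivAt_of_tendsto' (fun x _ => (hasDerivAt_primitive ha x).exp)
    (integrableOn_exp_primitive_mul ha hα hαpos t) (tendsto_exp_primitive_atBot ha hα hαpos),
    sub_zero]

variable {C c : ℝ}

theorem integrableOn_exp_primitive_mul_of_abs_le (ha : Continuous a) (hα : ∀ x, α ≤ a x)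
    (hαpos : 0 < α) (hb : Continuous b) (hbC : ∀ x, |b x| ≤ C * a x) (t : ℝ) :
    IntegrableOn (fun s => exp (primitive a s) * b s) (Iic t) := by
  refine ((integrableOn_exp_primitive_mul ha hα hαpos t).const_mul C).mono'
    ((continuous_primitive ha).rexp.mul hb).aestronglyMeasurable (ae_of_all _ fun s => ?_)
  rw [norm_mul, norm_of_nonneg (exp_pos _).le, norm_eq_abs, mul_left_comm]
  exact mul_le_mul_of_nonneg_left (hbC s) (exp_pos _).le

theorem integral_Iic_exp_primitive_mul_le (ha : Continuous a) (hα : ∀ x, α ≤ a x)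
    (hαpos : 0 < α) (hb : Continuous b) (hbC : ∀ x, |b x| ≤ C * a x) (t : ℝ) :
    ∫ s in Iic t, exp (primitive a s) * b s ≤ C * exp (primitive a t) := by
  rw [← integral_Iic_exp_primitive_mul ha hα hαpos t, ← integral_const_mul]
  refine integral_mono (integrableOn_exp_primitive_mul_of_abs_le ha hα hαpos hb hbC t)
    ((integrableOn_exp_primitive_mul ha hα hαpos t).const_mul C) fun s => ?_
  rw [mul_left_comm]
  exact mul_le_mul_of_nonneg_left ((le_abs_self _).trans (hbC s)) (exp_pos _).le

theorem mul_exp_primitive_le_integral_Iic (ha : Continuous a) (hα : ∀ x, α ≤ a x)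
    (hαpos : 0 < α) (hb : Continuous b) (hbC : ∀ x, |b x| ≤ C * a x)
    (hcb : ∀ x, c * a x ≤ b x) (t : ℝ) :
    c * exp (primitive a t) ≤ ∫ s in Iic t, exp (primitive a s) * b s := by
  rw [← integral_Iic_exp_primitive_mul ha hα hαpos t, ← integral_const_mul]
  refine integral_mono ((integrableOn_exp_primitive_mul ha hα hαpos t).const_mul c)
    (integrableOn_exp_primitive_mul_of_abs_le ha hα hαpos hb hbC t) fun s => ?_
  rw [mul_left_comm]
  exact mul_le_mul_of_nonneg_left (hcb s) (exp_pos _).le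

noncomputable def linearSolution (a b : ℝ → ℝ) (t : ℝ) : ℝ :=
  exp (-primitive a t) * ∫ s in Iic t, exp (primitive a s) * b s

theorem linearSolution_le (ha : Continuous a) (hα : ∀ x, α ≤ a x) (hαpos : 0 < α)
    (hb : Continuous b) (hbC : ∀ x, |b x| ≤ C * a x) (t : ℝ) : linearSolution a b t ≤ C := by
  have h := integral_Iic_exp_primitive_mul_le ha hα hαpos hb hbC t
  rw [linearSolution, exp_neg, inv_mul_le_iff₀ (exp_pos _), mul_comm]
  exact h

theorem le_linearSolution (ha : Continuous a) (hα : ∀ x, α ≤ a x) (hαpos : 0 < α)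
    (hb : Continuous b) (hbC : ∀ x, |b x| ≤ C * a x) (hcb : ∀ x, c * a x ≤ b x) (t : ℝ) :
    c ≤ linearSolution a b t := by
  have h := mul_exp_primitive_le_integral_Iic ha hα hαpos hb hbC hcb t
  rw [linearSolution, exp_neg, le_inv_mul_iff₀ (exp_pos _), mul_comm]
  exact h

theorem hasDerivAt_linearSolution (ha : Continuous a) (hα : ∀ x, α ≤ a x) (hαpos : 0 < α)
    (hb : Continuous b) (hbC : ∀ x, |b x| ≤ C * a x) (t : ℝ) :
    HasDerivAt (linearSolution a b) (b t - a t * linearSolution a b t) t := by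
  have hF := hasDerivAt_integral_Iic (g := fun s => exp (primitive a s) * b s)
    ((continuous_primitive ha).rexp.mul hb)
    (integrableOn_exp_primitive_mul_of_abs_le ha hα hαpos hb hbC) t
  refine ((hasDerivAt_primitive ha t).neg.exp.mul hF).congr_deriv ?_
  rw [Pi.neg_apply, linearSolution, ← mul_assoc, ← exp_add, neg_add_cancel, exp_zero]
  ring

theorem eq_zero_of_hasDerivAt_eq_neg_mul (ha : Continuous a) (hα : ∀ x, α ≤ a x)
    (hαpos : 0 < α) {d : ℝ → ℝ} (hd : ∀ t, HasDerivAt d (-(a t * d t)) t)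
    (hd_bdd : ∃ M, ∀ t, |d t| ≤ M) : d = 0 := by
  set φ := fun t => d t * exp (primitive a t) with hφ
  have hφ' : ∀ t, HasDerivAt φ 0 t := fun t =>
    ((hd t).mul (hasDerivAt_primitive ha t).exp).congr_deriv (by ring)
  have hφ_const : ∀ t, φ t = φ 0 := fun t =>
    is_const_of_deriv_eq_zero (fun x => (hφ' x).differentiableAt) (fun x => (hφ' x).deriv) t 0
  have hφ_lim : Tendsto φ atBot (𝓝 0) := by
    obtain ⟨M, hM⟩ := hd_bdd
    simpa only [hφ, mul_comm (d _)] using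
      (tendsto_exp_primitive_atBot ha hα hαpos).zero_mul_isBoundedUnder_le
        (isBoundedUnder_of ⟨M, fun t => (norm_eq_abs (d t)).trans_le (hM t)⟩)
  have hφ0 : φ 0 = 0 :=
    tendsto_nhds_unique (tendsto_const_nhds.congr fun t => (hφ_const t).symm) hφ_lim
  funext t
  simpa [hφ, (exp_pos _).ne'] using (hφ_const t).trans hφ0

theorem eq_of_hasDerivAt_linear (ha : Continuous a) (hα : ∀ x, α ≤ a x) (hαpos : 0 < α)
    {v w : ℝ → ℝ} (hv : ∀ t, HasDerivAt v (b t - a t * v t) t)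
    (hw : ∀ t, HasDerivAt w (b t - a t * w t) t)
    (hv_bdd : ∃ M, ∀ t, |v t| ≤ M) (hw_bdd : ∃ M, ∀ t, |w t| ≤ M) : v = w := by
  obtain ⟨M, hM⟩ := hv_bdd
  obtain ⟨N, hN⟩ := hw_bdd
  exact sub_eq_zero.1 (eq_zero_of_hasDerivAt_eq_neg_mul ha hα hαpos
    (fun t => ((hv t).sub (hw t)).congr_deriv (by simp only [Pi.sub_apply]; ring))
    ⟨M + N, fun t => (abs_sub _ _).trans (add_le_add (hM t) (hN t))⟩)

theorem hasDerivAt_inv_of_logistic {u : ℝ → ℝ} {p q x : ℝ}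
    (hu : HasDerivAt u (u x * (p - q * u x)) x) (hx : u x ≠ 0) :
    HasDerivAt (fun s => (u s)⁻¹) (q - p * (u x)⁻¹) x :=
  (hu.inv hx).congr_deriv (by field_simp; ring)

theorem hasDerivAt_inv_of_linear {v : ℝ → ℝ} {p q x : ℝ}
    (hv : HasDerivAt v (q - p * v x) x) (hx : v x ≠ 0) :
    HasDerivAt (fun s => (v s)⁻¹) ((v x)⁻¹ * (p - q * (v x)⁻¹)) x :=
  (hv.inv hx).congr_deriv (by field_simp; ring)

section Solution

variable {β A B : ℝ}

theorem abs_le_div_mul (hα : ∀ x, α ≤ a x) (hαpos : 0 < α) (hβ : ∀ x, β ≤ b x)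
    (hβpos : 0 < β) (hB : ∀ x, b x ≤ B) (x : ℝ) : |b x| ≤ B / α * a x := by
  have hBpos : 0 < B := hβpos.trans_le ((hβ x).trans (hB x))
  calc |b x| = b x := abs_of_pos (hβpos.trans_le (hβ x))
    _ ≤ B / α * α := by rw [div_mul_cancel₀ _ hαpos.ne']; exact hB x
    _ ≤ B / α * a x := mul_le_mul_of_nonneg_left (hα x) (div_pos hBpos hαpos).le

theorem div_mul_le (hα : ∀ x, α ≤ a x) (hαpos : 0 < α) (hA : ∀ x, a x ≤ A)
    (hβ : ∀ x, β ≤ b x) (hβpos : 0 < β) (x : ℝ) : β / A * a x ≤ b x := by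
  have hApos : 0 < A := hαpos.trans_le ((hα x).trans (hA x))
  calc β / A * a x ≤ β / A * A := mul_le_mul_of_nonneg_left (hA x) (div_pos hβpos hApos).le
    _ = β := div_mul_cancel₀ _ hApos.ne'
    _ ≤ b x := hβ x

noncomputable def solution (a b : ℝ → ℝ) (t : ℝ) : ℝ := (linearSolution a b t)⁻¹

variable (ha : Continuous a) (hb : Continuous b) (hα : ∀ x, α ≤ a x) (hαpos : 0 < α)
  (hA : ∀ x, a x ≤ A) (hβ : ∀ x, β ≤ b x) (hβpos : 0 < β) (hB : ∀ x, b x ≤ B)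
include ha hb hα hαpos hA hβ hβpos hB

theorem linearSolution_mem_Icc (t : ℝ) : linearSolution a b t ∈ Icc (β / A) (B / α) :=
  ⟨le_linearSolution ha hα hαpos hb (abs_le_div_mul hα hαpos hβ hβpos hB)
      (div_mul_le hα hαpos hA hβ hβpos) t,
    linearSolution_le ha hα hαpos hb (abs_le_div_mul hα hαpos hβ hβpos hB) t⟩

theorem linearSolution_pos (t : ℝ) : 0 < linearSolution a b t :=
  (div_pos hβpos (hαpos.trans_le ((hα t).trans (hA t)))).trans_le
    (linearSolution_mem_Icc ha hb hα hαpos hA hβ hβpos hB t).1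

theorem solution_mem_Icc (t : ℝ) : solution a b t ∈ Icc (α / B) (A / β) := by
  obtain ⟨hlow, hup⟩ := linearSolution_mem_Icc ha hb hα hαpos hA hβ hβpos hB t
  rw [solution, mem_Icc, ← inv_div, ← inv_div β]
  exact ⟨inv_anti₀ (linearSolution_pos ha hb hα hαpos hA hβ hβpos hB t) hup,
    inv_anti₀ (div_pos hβpos (hαpos.trans_le ((hα t).trans (hA t)))) hlow⟩

theorem hasDerivAt_solution (t : ℝ) :
    HasDerivAt (solution a b)
      (solution a b t * (a t - b t * solution a b t)) t :=
  hasDerivAt_inv_of_linear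
    (hasDerivAt_linearSolution ha hα hαpos hb (abs_le_div_mul hα hαpos hβ hβpos hB) t)
    (linearSolution_pos ha hb hα hαpos hA hβ hβpos hB t).ne'

theorem eq_solution {u : ℝ → ℝ} (hu : ∀ t, HasDerivAt u (u t * (a t - b t * u t)) t)
    {m : ℝ} (hm : 0 < m) (hmu : ∀ t, m ≤ u t) : u = solution a b := by
  have hu_pos : ∀ t, 0 < u t := fun t => hm.trans_le (hmu t)
  have hinv : (fun t => (u t)⁻¹) = linearSolution a b := by
    refine eq_of_hasDerivAt_linear ha hα hαpos
      (fun t => hasDerivAt_inv_of_logistic (hu t) (hu_pos t).ne')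
      (hasDerivAt_linearSolution ha hα hαpos hb (abs_le_div_mul hα hαpos hβ hβpos hB))
      ⟨m⁻¹, fun t => ?_⟩ ⟨B / α, fun t => ?_⟩
    · rw [abs_of_pos (inv_pos.2 (hu_pos t))]
      exact inv_anti₀ hm (hmu t)
    · rw [abs_of_pos (linearSolution_pos ha hb hα hαpos hA hβ hβpos hB t)]
      exact (linearSolution_mem_Icc ha hb hα hαpos hA hβ hβpos hB t).2
  funext t
  rw [solution, ← congrFun hinv t, inv_inv]

end Solution

end Logistic

/-- The nonautonomous logistic equation `u' = u (a - b u)`, with `a, b`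
continuous, bounded, and with positive infimum, has exactly one entire solution that is
bounded and has positive infimum; moreover this solution `u*` satisfies
`(inf a) / (sup b) ≤ u*(t) ≤ (sup a) / (inf b)` for all `t`. -/
theorem logistic_unique_bounded_positive_entire_solution
    (a b : ℝ → ℝ)
    (ha_cont : Continuous a) (hb_cont : Continuous b)
    (ha_bddAbove : BddAbove (Set.range a)) (hb_bddAbove : BddAbove (Set.range b))
    (ha_inf_pos : 0 < ⨅ t, a t) (hb_inf_pos : 0 < ⨅ t, b t) :
    (∃! u : ℝ → ℝ,
        (∀ t, HasDerivAt u (u t * (a t - b t * u t)) t) ∧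
        BddAbove (Set.range u) ∧ 0 < ⨅ t, u t) ∧
    (∀ u : ℝ → ℝ,
        ((∀ t, HasDerivAt u (u t * (a t - b t * u t)) t) ∧
          BddAbove (Set.range u) ∧ 0 < ⨅ t, u t) →
        ∀ t, (⨅ s, a s) / (⨆ s, b s) ≤ u t ∧ u t ≤ (⨆ s, a s) / (⨅ s, b s)) := by
  have hα := Real.iInf_le_of_iInf_pos ha_inf_pos
  have hβ := Real.iInf_le_of_iInf_pos hb_inf_pos
  have hA := le_ciSup ha_bddAbove
  have hB := le_ciSup hb_bddAbove
  have hbounds := Logistic.solution_mem_Icc ha_cont hb_cont hα ha_inf_pos hA hβ hb_inf_pos hB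
  have huniq : ∀ u : ℝ → ℝ, ((∀ t, HasDerivAt u (u t * (a t - b t * u t)) t) ∧
      BddAbove (Set.range u) ∧ 0 < ⨅ t, u t) → u = Logistic.solution a b :=
    fun u ⟨hu, _, hu_inf⟩ => Logistic.eq_solution ha_cont hb_cont hα ha_inf_pos hA hβ
      hb_inf_pos hB hu hu_inf (Real.iInf_le_of_iInf_pos hu_inf)
  have hinf_pos : 0 < ⨅ t, Logistic.solution a b t :=
    (div_pos ha_inf_pos (hb_inf_pos.trans_le ((hβ 0).trans (hB 0)))).trans_le
      (le_ciInf fun t => (hbounds t).1)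
  refine ⟨⟨Logistic.solution a b, ⟨?_, ?_, hinf_pos⟩, huniq⟩,
    fun u hu t => huniq u hu ▸ hbounds t⟩
  · exact Logistic.hasDerivAt_solution ha_cont hb_cont hα ha_inf_pos hA hβ hb_inf_pos hB
  · exact ⟨_, forall_mem_range.2 fun t => (hbounds t).2⟩
end

section
/- If in addition a and b are periodic with period T > 0 (i.e. a(t+T) = a(t) and b(t+T) = b(t) for all t), then the unique bounded entire solution u* with inf_{t∈ℝ} u*(t) > 0 is also periodic with period T; and if a and b are almost periodic, then u* is almost periodic. -/
/-! If `u`, `v` are solutions with values in `[m, M]` of two logistic equations whose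
coefficients differ by at most `δ`, with `b ≥ b₀ > 0`, then `w = log u - log v` satisfies
`w' ≤ -b₀ m (w - θ)` wherever `w > θ := δ (1 + M) / (b₀ m)`. As `w` is bounded, a barrier
started ever further in the past forces `w ≤ θ`, so `u` and `v` differ by at most
`M (exp θ - 1)`. Applied to `u*` and its translate `u*(· + τ)`, which solves the equation with
translated coefficients, this shows that periods of `(a, b)` are periods of `u*`, and that
common `δ`-almost periods of `a` and `b` are `ε`-almost periods of `u*`. Common almost periods
of two almost periodic functions are relatively dense by a total boundedness argument. -/

/-- A continuous function `f : ℝ → ℝ` is (Bohr) almost periodic: for every `ε > 0` the set of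
`ε`-periods of `f` is relatively dense in `ℝ`. -/
def BohrAlmostPeriodic (f : ℝ → ℝ) : Prop :=
  Continuous f ∧
    ∀ ε > 0, ∃ l > 0, ∀ s : ℝ, ∃ τ ∈ Set.Icc s (s + l), ∀ t : ℝ, |f (t + τ) - f t| < ε

open Set Filter Topology Real

theorem le_of_hasDerivAt_le_neg_mul_sub {w w' : ℝ → ℝ} {c θ : ℝ} (hc : 0 < c)
    (hw : ∀ t, HasDerivAt w (w' t) t) (hbdd : BddAbove (range w))
    (hdecay : ∀ t, θ < w t → w' t ≤ -c * (w t - θ)) (t : ℝ) : w t ≤ θ := by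
  obtain ⟨K, hK, hwK⟩ : ∃ K > 0, ∀ s, w s ≤ θ + K := by
    obtain ⟨M, hM⟩ := hbdd
    refine ⟨max (M - θ) 0 + 1, by positivity, fun s => ?_⟩
    linarith [hM (mem_range_self s), le_max_left (M - θ) 0]
  -- The barrier decays at the slower rate `c / 2`, so `w` can never touch it from below.
  have barrier : ∀ r ≥ 0, w t ≤ θ + K * exp (-(c / 2) * r) := by
    intro r hr
    set B : ℝ → ℝ := fun x => θ + K * exp (-(c / 2) * (x - (t - r)))
    have hB : ∀ x, HasDerivAt B (-(c / 2) * (B x - θ)) x := by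
      intro x
      refine ((((hasDerivAt_id x).sub_const (t - r)).const_mul (-(c / 2))).exp.const_mul K
        |>.const_add θ).congr_deriv ?_
      simp only [B, id]
      ring
    have hwB := image_le_of_deriv_right_lt_deriv_boundary (a := t - r) (b := t)
      (fun x _ => (hw x).continuousAt.continuousWithinAt) (fun x _ => (hw x).hasDerivWithinAt)
      (by simpa [B] using hwK (t - r)) hB (fun x _ hx => ?_) ⟨by linarith, le_rfl⟩
    · simpa [B] using hwB
    have hpos : 0 < B x - θ := by simp only [B, add_sub_cancel_left]; positivity
    calc w' x ≤ -c * (w x - θ) := hdecay x (by linarith)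
      _ < -(c / 2) * (B x - θ) := by rw [hx]; nlinarith
  have hlim : Tendsto (fun r => θ + K * exp (-(c / 2) * r)) atTop (𝓝 θ) := by
    have := (tendsto_exp_neg_atTop_nhds_zero.comp (tendsto_id.const_mul_atTop (half_pos hc)))
    simpa using (this.const_mul K).const_add θ
  exact ge_of_tendsto hlim (eventually_ge_atTop 0 |>.mono barrier)

theorem HasDerivAt.log_of_eq_mul {f : ℝ → ℝ} {g x : ℝ} (hf : HasDerivAt f (f x * g) x)
    (hx : f x ≠ 0) : HasDerivAt (fun t => Real.log (f t)) g x :=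
  (hf.log hx).congr_deriv (mul_div_cancel_left₀ g hx)

theorem logistic_le_mul_exp {a₁ b₁ a₂ b₂ u v : ℝ → ℝ} {m M b₀ δ : ℝ}
    (hm : 0 < m) (hb₀ : 0 < b₀) (hδ : 0 ≤ δ)
    (hu : ∀ t, HasDerivAt u (u t * (a₁ t - b₁ t * u t)) t)
    (hv : ∀ t, HasDerivAt v (v t * (a₂ t - b₂ t * v t)) t)
    (hu_pos : ∀ t, 0 < u t) (hu_bdd : BddAbove (range u)) (hv_mem : ∀ t, v t ∈ Icc m M)
    (hb₁ : ∀ t, b₀ ≤ b₁ t) (ha : ∀ t, |a₁ t - a₂ t| ≤ δ) (hb : ∀ t, |b₁ t - b₂ t| ≤ δ)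
    (t : ℝ) : u t ≤ v t * exp (δ * (1 + M) / (b₀ * m)) := by
  have hv_pos : ∀ t, 0 < v t := fun t => hm.trans_le (hv_mem t).1
  set θ := δ * (1 + M) / (b₀ * m)
  set w := fun t => log (u t) - log (v t)
  have hu_eq : ∀ t, u t = v t * exp (w t) := fun t => by
    rw [exp_sub, exp_log (hu_pos t), exp_log (hv_pos t), mul_div_cancel₀ _ (hv_pos t).ne']
  have hw : ∀ t, HasDerivAt w ((a₁ t - b₁ t * u t) - (a₂ t - b₂ t * v t)) t := fun t =>
    ((hu t).log_of_eq_mul (hu_pos t).ne').sub ((hv t).log_of_eq_mul (hv_pos t).ne')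
  have hw_bdd : BddAbove (range w) := by
    obtain ⟨U, hU⟩ := hu_bdd
    refine ⟨log U - log m, forall_mem_range.2 fun t => ?_⟩
    have hlog_u := log_le_log (hu_pos t) (hU (mem_range_self t))
    have hlog_v := log_le_log hm (hv_mem t).1
    simp only [w]
    linarith
  -- Where `w > θ`, `u - v = v (e^w - 1) ≥ m w`, so the `-b₁ u` term of `w'` beats the defect.
  have hdecay : ∀ t, θ < w t →
      (a₁ t - b₁ t * u t) - (a₂ t - b₂ t * v t) ≤ -(b₀ * m) * (w t - θ) := by
    intro t hθw
    have hM : 0 ≤ M := hm.le.trans ((hv_mem t).1.trans (hv_mem t).2)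
    have hw_pos : 0 < w t := lt_of_le_of_lt (by positivity) hθw
    have hgap : m * w t ≤ u t - v t := by
      rw [hu_eq t]
      nlinarith [add_one_le_exp (w t), (hv_mem t).1]
    have hb_term : (b₂ t - b₁ t) * v t ≤ δ * M := by
      have hb' : b₂ t - b₁ t ≤ δ := by linarith [neg_abs_le (b₁ t - b₂ t), hb t]
      calc (b₂ t - b₁ t) * v t ≤ δ * v t := by gcongr; exact (hv_pos t).le
        _ ≤ δ * M := by gcongr; exact (hv_mem t).2
    have hθ : b₀ * m * θ = δ * (1 + M) := mul_div_cancel₀ _ (by positivity)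
    have hb_gap : b₀ * (m * w t) ≤ b₁ t * (u t - v t) :=
      mul_le_mul (hb₁ t) hgap (by positivity) (hb₀.le.trans (hb₁ t))
    linarith [le_abs_self (a₁ t - a₂ t), ha t]
  calc u t = v t * exp (w t) := hu_eq t
    _ ≤ v t * exp θ := by
      gcongr
      · exact (hv_pos t).le
      exact le_of_hasDerivAt_le_neg_mul_sub (by positivity) hw hw_bdd hdecay t

theorem logistic_abs_sub_le {a₁ b₁ a₂ b₂ u v : ℝ → ℝ} {m M b₀ δ : ℝ}
    (hm : 0 < m) (hb₀ : 0 < b₀) (hδ : 0 ≤ δ)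
    (hu : ∀ t, HasDerivAt u (u t * (a₁ t - b₁ t * u t)) t)
    (hv : ∀ t, HasDerivAt v (v t * (a₂ t - b₂ t * v t)) t)
    (hu_mem : ∀ t, u t ∈ Icc m M) (hv_mem : ∀ t, v t ∈ Icc m M)
    (hb₁ : ∀ t, b₀ ≤ b₁ t) (hb₂ : ∀ t, b₀ ≤ b₂ t)
    (ha : ∀ t, |a₁ t - a₂ t| ≤ δ) (hb : ∀ t, |b₁ t - b₂ t| ≤ δ) (t : ℝ) :
    |u t - v t| ≤ M * (exp (δ * (1 + M) / (b₀ * m)) - 1) := by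
  have hM : 0 ≤ M := hm.le.trans ((hu_mem t).1.trans (hu_mem t).2)
  have hexp : 1 ≤ exp (δ * (1 + M) / (b₀ * m)) := one_le_exp (by positivity)
  have hpos : ∀ {w : ℝ → ℝ}, (∀ t, w t ∈ Icc m M) → ∀ t, 0 < w t :=
    fun hw t => hm.trans_le (hw t).1
  have hbdd : ∀ {w : ℝ → ℝ}, (∀ t, w t ∈ Icc m M) → BddAbove (range w) :=
    fun hw => ⟨M, forall_mem_range.2 fun t => (hw t).2⟩
  have huv := logistic_le_mul_exp hm hb₀ hδ hu hv (hpos hu_mem) (hbdd hu_mem) hv_mem hb₁ ha hb t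
  have hvu := logistic_le_mul_exp hm hb₀ hδ hv hu (hpos hv_mem) (hbdd hv_mem) hu_mem hb₂
    (fun t => abs_sub_comm (a₁ t) _ ▸ ha t) (fun t => abs_sub_comm (b₁ t) _ ▸ hb t) t
  rw [abs_sub_le_iff]
  constructor <;> nlinarith [mul_le_mul_of_nonneg_right (hu_mem t).2 (sub_nonneg.2 hexp),
    mul_le_mul_of_nonneg_right (hv_mem t).2 (sub_nonneg.2 hexp)]

def IsRelativelyDense (s : Set ℝ) : Prop :=
  ∃ l > 0, ∀ x : ℝ, ∃ τ ∈ Icc x (x + l), τ ∈ s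

def almostPeriods (f : ℝ → ℝ) (ε : ℝ) : Set ℝ :=
  {τ | ∀ t, |f (t + τ) - f t| < ε}

theorem bohrAlmostPeriodic_iff {f : ℝ → ℝ} :
    BohrAlmostPeriodic f ↔ Continuous f ∧ ∀ ε > 0, IsRelativelyDense (almostPeriods f ε) :=
  Iff.rfl

theorem IsRelativelyDense.mono {s t : Set ℝ} (hs : IsRelativelyDense s) (hst : s ⊆ t) :
    IsRelativelyDense t :=
  let ⟨l, hl, h⟩ := hs
  ⟨l, hl, fun x => let ⟨τ, hτx, hτs⟩ := h x; ⟨τ, hτx, hst hτs⟩⟩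

theorem isRelativelyDense_of_forall_exists_abs_sub_le {s : Set ℝ} {C : ℝ}
    (h : ∀ x, ∃ τ ∈ s, |τ - x| ≤ C) : IsRelativelyDense s := by
  have hC : 0 ≤ C := let ⟨_, _, hτ⟩ := h 0; (abs_nonneg _).trans hτ
  refine ⟨2 * C + 1, by positivity, fun x => ?_⟩
  obtain ⟨τ, hτs, hτx⟩ := h (x + C)
  have := abs_le.1 hτx
  exact ⟨τ, ⟨by linarith, by linarith⟩, hτs⟩

theorem sub_mem_almostPeriods {f : ℝ → ℝ} {τ₁ τ₂ ε₁ ε₂ : ℝ} (h₁ : τ₁ ∈ almostPeriods f ε₁)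
    (h₂ : τ₂ ∈ almostPeriods f ε₂) : τ₁ - τ₂ ∈ almostPeriods f (ε₁ + ε₂) := fun t => by
  have e₁ := h₁ (t - τ₂)
  have e₂ := h₂ (t - τ₂)
  rw [sub_add_cancel, abs_sub_comm] at e₂
  calc |f (t + (τ₁ - τ₂)) - f t|
      ≤ |f (t - τ₂ + τ₁) - f (t - τ₂)| + |f (t - τ₂) - f t| := by
        rw [show t + (τ₁ - τ₂) = t - τ₂ + τ₁ by ring]; exact abs_sub_le _ _ _
    _ < ε₁ + ε₂ := add_lt_add e₁ e₂

theorem almostPeriods_mono {f : ℝ → ℝ} {ε₁ ε₂ : ℝ} (h : ε₁ ≤ ε₂) :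
    almostPeriods f ε₁ ⊆ almostPeriods f ε₂ :=
  fun _ hτ t => (hτ t).trans_le h

theorem mem_almostPeriods_of_abs_sub_lt {f : ℝ → ℝ} {σ τ δ ε₁ ε₂ : ℝ}
    (hfδ : ∀ ⦃x y : ℝ⦄, dist x y < δ → dist (f x) (f y) < ε₁) (hσ : σ ∈ almostPeriods f ε₂)
    (hτσ : |τ - σ| < δ) : τ ∈ almostPeriods f (ε₁ + ε₂) := fun t => by
  have hclose : dist (t + τ) (t + σ) < δ := by rwa [dist_add_left, Real.dist_eq]
  calc |f (t + τ) - f t| ≤ |f (t + τ) - f (t + σ)| + |f (t + σ) - f t| := abs_sub_le _ _ _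
    _ < ε₁ + ε₂ := add_lt_add (Real.dist_eq _ _ ▸ hfδ hclose) (hσ t)

theorem BohrAlmostPeriodic.uniformContinuous {f : ℝ → ℝ} (hf : BohrAlmostPeriodic f) :
    UniformContinuous f := by
  rw [Metric.uniformContinuous_iff]
  intro ε hε
  obtain ⟨l, -, hl⟩ := hf.2 (ε / 3) (by positivity)
  have hK : UniformContinuousOn f (Icc (-1) (l + 1)) :=
    isCompact_Icc.uniformContinuousOn_of_continuous hf.1.continuousOn
  obtain ⟨δ, hδ, hfδ⟩ := Metric.uniformContinuousOn_iff.1 hK (ε / 3) (by positivity)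
  refine ⟨min δ 1, by positivity, fun {x y} hxy => ?_⟩
  -- Translate `x` into `[0, l]` by an almost period; uniform continuity on a compact does the rest.
  obtain ⟨τ, ⟨hτ₁, hτ₂⟩, hτ⟩ := hl (-x)
  have hxy₁ := abs_lt.1 (Real.dist_eq x y ▸ hxy.trans_le (min_le_right δ 1))
  have hmid : dist (f (x + τ)) (f (y + τ)) < ε / 3 :=
    hfδ _ ⟨by linarith, by linarith⟩ _ ⟨by linarith, by linarith⟩
      (by rw [dist_add_right]; exact hxy.trans_le (min_le_left δ 1))
  calc dist (f x) (f y) ≤ dist (f x) (f (x + τ)) + dist (f (x + τ)) (f (y + τ))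
        + dist (f (y + τ)) (f y) := dist_triangle4 _ _ _ _
    _ < ε / 3 + ε / 3 + ε / 3 := by
        gcongr
        · rw [dist_comm, Real.dist_eq]; exact hτ x
        · rw [Real.dist_eq]; exact hτ y
    _ = ε := by ring

theorem BohrAlmostPeriodic.isRelativelyDense_almostPeriods_inter {f g : ℝ → ℝ}
    (hf : BohrAlmostPeriodic f) (hg : BohrAlmostPeriodic g) {ε : ℝ} (hε : 0 < ε) :
    IsRelativelyDense (almostPeriods f ε ∩ almostPeriods g ε) := by
  obtain ⟨lf, -, hlf⟩ := hf.2 (ε / 3) (by positivity)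
  obtain ⟨lg, -, hlg⟩ := hg.2 (ε / 3) (by positivity)
  choose τf hτf_mem hτf using hlf
  choose τg hτg_mem hτg using hlg
  obtain ⟨δ, hδ, hgδ⟩ :=
    Metric.uniformContinuous_iff.1 hg.uniformContinuous (ε / 3) (by positivity)
  set φ := fun x => τf x - τg x
  -- Every `x` has one of finitely many partners `s` with `φ s` `δ`-close to `φ x`; then
  -- `τf x - τf s` is a common almost period at bounded distance from `x`.
  have hφ : TotallyBounded (range φ) := by
    refine (isCompact_Icc (a := -lg) (b := lf)).totallyBounded.subset
      (range_subset_iff.2 fun x => ?_)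
    have hf_mem := hτf_mem x
    have hg_mem := hτg_mem x
    simp only [φ, mem_Icc] at hf_mem hg_mem ⊢
    constructor <;> linarith
  obtain ⟨S, -, hS, hS_cover⟩ := exists_subset_image_finite_and (f := φ) (s := univ)
    (p := fun T => range φ ⊆ ⋃ y ∈ T, Metric.ball y δ) |>.1
    (by rw [image_univ]; exact Metric.finite_approx_of_totallyBounded hφ δ hδ)
  obtain ⟨R, hR⟩ := hS.isBounded.subset_closedBall 0
  refine isRelativelyDense_of_forall_exists_abs_sub_le (C := lf + R) fun x => ?_
  obtain ⟨s, hsS, hxs⟩ := mem_iUnion₂.1 (biUnion_image ▸ hS_cover (mem_range_self x))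
  have hs : |s| ≤ R := by simpa using hR hsS
  refine ⟨τf x - τf s, ⟨?_, ?_⟩, ?_⟩
  · exact almostPeriods_mono (by linarith) (sub_mem_almostPeriods (hτf x) (hτf s))
  · refine almostPeriods_mono (by linarith)
      (mem_almostPeriods_of_abs_sub_lt hgδ (sub_mem_almostPeriods (hτg x) (hτg s)) ?_)
    rw [Metric.mem_ball, Real.dist_eq] at hxs
    convert hxs using 2
    simp only [φ]
    ring
  · have hx := hτf_mem x
    have hs' := hτf_mem s
    simp only [mem_Icc] at hx hs'
    rw [abs_le] at hs ⊢
    constructor <;> linarith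

theorem bddBelow_range_of_iInf_pos {ι : Type*} {f : ι → ℝ} (h : 0 < ⨅ i, f i) :
    BddBelow (range f) := by
  by_contra hf
  rw [Real.iInf_of_not_bddBelow hf] at h
  exact h.false

theorem logistic_entire_solution_periodic_and_almost_periodic_general
    (a b ustar : ℝ → ℝ)
    (hb_inf_pos : 0 < ⨅ t, b t)
    (hstar : (∀ t, HasDerivAt ustar (ustar t * (a t - b t * ustar t)) t) ∧
      BddAbove (Set.range ustar) ∧ 0 < ⨅ t, ustar t) :
    (∀ T : ℝ, 0 < T →
      ((∀ t, a (t + T) = a t) ∧ (∀ t, b (t + T) = b t)) →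
      ∀ t, ustar (t + T) = ustar t) ∧
    ((BohrAlmostPeriodic a ∧ BohrAlmostPeriodic b) → BohrAlmostPeriodic ustar) := by
  obtain ⟨hu, hu_bdd, hu_inf⟩ := hstar
  set m := ⨅ t, ustar t
  set M := ⨆ t, ustar t
  set b₀ := ⨅ t, b t
  have hu_mem : ∀ t, ustar t ∈ Icc m M := fun t =>
    ⟨ciInf_le (bddBelow_range_of_iInf_pos hu_inf) t, le_ciSup hu_bdd t⟩
  have hb₀ : ∀ t, b₀ ≤ b t := ciInf_le (bddBelow_range_of_iInf_pos hb_inf_pos)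
  have shift : ∀ τ δ, 0 ≤ δ → (∀ t, |a (t + τ) - a t| ≤ δ) → (∀ t, |b (t + τ) - b t| ≤ δ) →
      ∀ t, |ustar (t + τ) - ustar t| ≤ M * (exp (δ * (1 + M) / (b₀ * m)) - 1) :=
    fun τ δ hδ ha hb => logistic_abs_sub_le hu_inf hb_inf_pos hδ
      (fun t => (hu (t + τ)).comp_add_const t τ) hu (fun t => hu_mem _) hu_mem
      (fun t => hb₀ _) hb₀ ha hb
  refine ⟨fun T _ ⟨ha, hb⟩ t => ?_, fun ⟨ha, hb⟩ => bohrAlmostPeriodic_iff.2 ⟨?_, fun ε hε => ?_⟩⟩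
  · simpa [sub_eq_zero] using shift T 0 le_rfl (by simp [ha]) (by simp [hb]) t
  · exact continuous_iff_continuousAt.2 fun t => (hu t).continuousAt
  · have hlim : Tendsto (fun δ => M * (exp (δ * (1 + M) / (b₀ * m)) - 1)) (𝓝[>] 0) (𝓝 0) := by
      have hc : Continuous fun δ => M * (exp (δ * (1 + M) / (b₀ * m)) - 1) := by fun_prop
      simpa using (hc.tendsto 0).mono_left nhdsWithin_le_nhds
    obtain ⟨δ, hδε, hδ⟩ := ((hlim.eventually (gt_mem_nhds hε)).and self_mem_nhdsWithin).exists
    exact (ha.isRelativelyDense_almostPeriods_inter hb hδ).mono fun τ ⟨hτa, hτb⟩ t =>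
      (shift τ δ hδ.le (fun t => (hτa t).le) (fun t => (hτb t).le) t).trans_lt hδε

/-- If `a` and `b` are periodic with period `T > 0`, then the unique bounded
entire solution `u*` of the logistic equation with positive infimum is also `T`-periodic;
and if `a` and `b` are almost periodic, then `u*` is almost periodic. -/
theorem logistic_entire_solution_periodic_and_almost_periodic
    (a b ustar : ℝ → ℝ)
    (ha_cont : Continuous a) (hb_cont : Continuous b)
    (ha_bddAbove : BddAbove (Set.range a)) (hb_bddAbove : BddAbove (Set.range b))
    (ha_inf_pos : 0 < ⨅ t, a t) (hb_inf_pos : 0 < ⨅ t, b t)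
    (hstar : (∀ t, HasDerivAt ustar (ustar t * (a t - b t * ustar t)) t) ∧
      BddAbove (Set.range ustar) ∧ 0 < ⨅ t, ustar t) :
    (∀ T : ℝ, 0 < T →
      ((∀ t, a (t + T) = a t) ∧ (∀ t, b (t + T) = b t)) →
      ∀ t, ustar (t + T) = ustar t) ∧
    ((BohrAlmostPeriodic a ∧ BohrAlmostPeriodic b) → BohrAlmostPeriodic ustar) :=
  logistic_entire_solution_periodic_and_almost_periodic_general a b ustar hb_inf_pos hstar
end

section
/- Suppose (u₁, v₁) and (u₂, v₂) are two solutions of the Lotka–Volterra competition system defined on [t₀, ∞) with u_k(t₀) > 0 and v_k(t₀) > 0 for k = 1, 2. Then u₁(t) − u₂(t) → 0 and v₁(t) − v₂(t) → 0 as t → ∞. -/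
/-!
Both species of a solution stay positive (integrating factor) and, by comparison with logistic
equations, eventually enter a box `[m₁, M₁] × [m₂, M₂]` with `m₁, m₂ > 0`: the two conditions on
the coefficients say that the eventual upper bound of either species still leaves the other one a
positive growth rate when it is rare. They also give `c₁ᴹ b₂ᴹ < c₂ᴸ b₁ᴸ`, so some `β` satisfies
`c₁ᴹ / c₂ᴸ < β < b₁ᴸ / b₂ᴹ`. For two solutions in the box, the right derivative of
`V = |log u₁ - log u₂| + β |log v₁ - log v₂|` is at most
`-(b₁ - β b₂) |u₁ - u₂| - (β c₂ - c₁) |v₁ - v₂| ≤ -κ V`, because `|x - y| ≥ m |log x - log y|` on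
`[m, ∞)`. Hence `V` decays exponentially, and `|u₁ - u₂|`, `|v₁ - v₂|` are at most multiples of `V`.
-/

open Set Filter Topology Real

section GrowthEquation

variable {x g : ℝ → ℝ} {t₀ : ℝ}

theorem pos_of_hasDerivWithinAt_mul (hg : ContinuousOn g (Ici t₀))
    (hx : ∀ t ∈ Ici t₀, HasDerivWithinAt x (x t * g t) (Ici t₀) t) (h₀ : 0 < x t₀) :
    ∀ t ∈ Ici t₀, 0 < x t := by
  set G : ℝ → ℝ := fun t => g (max t t₀)
  have hG : Continuous G :=
    hg.comp_continuous (continuous_id.max continuous_const) fun t => le_max_right t t₀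
  set F : ℝ → ℝ := fun t => ∫ s in t₀..t, G s
  have hF : ∀ t, HasDerivAt F (G t) t := fun t =>
    (hG.integral_hasStrictDerivAt t₀ t).hasDerivAt
  intro t ht
  -- `F` is a primitive of `g` on `[t₀, ∞)`, so `x · exp (-F)` is constant there
  have key := constant_of_has_deriv_right_zero (f := fun s => x s * exp (-F s)) (b := t)
    (((HasDerivWithinAt.continuousOn hx).mono Icc_subset_Ici_self).mul
      (continuous_iff_continuousAt.2 fun s => (hF s).continuousAt).neg.rexp.continuousOn)
    (fun s hs => by
      refine (((hx s hs.1).mono (Ici_subset_Ici.2 hs.1)).mul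
        (hF s).neg.exp.hasDerivWithinAt).congr_deriv ?_
      rw [show G s = g s from congrArg g (max_eq_left hs.1)]
      ring) t ⟨ht, le_rfl⟩
  simp only [F, intervalIntegral.integral_same, neg_zero, exp_zero, mul_one] at key
  exact pos_of_mul_pos_left (key ▸ h₀) (exp_pos _).le

theorem le_of_deriv_neg_of_eq {f f' : ℝ → ℝ} {T M : ℝ}
    (hf : ∀ t ∈ Ici T, HasDerivWithinAt f (f' t) (Ici T) t) (hT : f T ≤ M)
    (hM : ∀ t, T ≤ t → f t = M → f' t < 0) : ∀ t, T ≤ t → f t ≤ M := fun _ ht =>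
  image_le_of_deriv_right_lt_deriv_boundary'
    ((HasDerivWithinAt.continuousOn hf).mono Icc_subset_Ici_self)
    (fun s hs => (hf s hs.1).mono (Ici_subset_Ici.2 hs.1)) hT continuousOn_const
    (fun s _ => hasDerivWithinAt_const s _ M) (fun s hs => hM s hs.1) ⟨ht, le_rfl⟩

theorem exists_le_of_deriv_le_neg {f f' : ℝ → ℝ} {T M c : ℝ} (hc : 0 < c)
    (hf : ∀ t ∈ Ici T, HasDerivWithinAt f (f' t) (Ici T) t)
    (hM : ∀ t, T ≤ t → M < f t → f' t ≤ -c) : ∃ t, T ≤ t ∧ f t ≤ M := by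
  by_contra! hgt
  set t := T + (f T - M) / c + 1
  have hTt : T ≤ t := by
    have : 0 ≤ (f T - M) / c := div_nonneg (by linarith [hgt T le_rfl]) hc.le
    linarith
  have hdescent := image_le_of_deriv_right_le_deriv_boundary (B := fun s => f T - c * (s - T))
    ((HasDerivWithinAt.continuousOn hf).mono Icc_subset_Ici_self)
    (fun s hs => (hf s hs.1).mono (Ici_subset_Ici.2 hs.1)) (by simp) (by fun_prop)
    (fun s _ => by
      simpa using (((hasDerivWithinAt_id s _).sub_const T).const_mul c).const_sub (f T))
    (fun s hs => hM s hs.1 (hgt s hs.1)) ⟨hTt, le_rfl⟩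
  have : c * (t - T) = f T - M + c := by simp only [t]; field_simp; ring
  linarith [hgt t hTt]

theorem eventually_le_of_hasDerivWithinAt_mul {A B M : ℝ} (hB : 0 ≤ B) (hM : 0 < M)
    (hAM : A < B * M) (hx : ∀ t ∈ Ici t₀, HasDerivWithinAt x (x t * g t) (Ici t₀) t)
    (hpos : ∀ t ∈ Ici t₀, 0 < x t) (hg : ∀ t ∈ Ici t₀, g t ≤ A - B * x t) :
    ∀ᶠ t in atTop, x t ≤ M := by
  have hc : 0 < M * (B * M - A) := mul_pos hM (sub_pos.2 hAM)
  -- `x (A - B x) ≤ M (A - B M)` once `x ≥ M > A / B`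
  have hdecr : ∀ t, t₀ ≤ t → M ≤ x t → x t * g t ≤ -(M * (B * M - A)) := fun t ht hMx => by
    have := mul_le_mul_of_nonneg_left (hg t ht) (hpos t ht).le
    nlinarith [mul_nonneg (sub_nonneg.2 hMx) (mul_nonneg hB (hpos t ht).le)]
  obtain ⟨t₁, ht₀₁, hx₁⟩ := exists_le_of_deriv_le_neg hc hx fun t ht h => hdecr t ht h.le
  refine eventually_atTop.2 ⟨t₁, le_of_deriv_neg_of_eq
    (fun t ht => (hx t (ht₀₁.trans ht)).mono (Ici_subset_Ici.2 ht₀₁)) hx₁ fun t ht h => ?_⟩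
  linarith [hdecr t (ht₀₁.trans ht) h.ge]

theorem exists_pos_eventually_le_of_hasDerivWithinAt_mul {δ : ℝ} (hδ : 0 < δ)
    (hx : ∀ t ∈ Ici t₀, HasDerivWithinAt x (x t * g t) (Ici t₀) t)
    (hpos : ∀ t ∈ Ici t₀, 0 < x t) (hg : ∀ᶠ t in atTop, x t ≤ δ → 0 < g t) :
    ∃ m, 0 < m ∧ ∀ᶠ t in atTop, m ≤ x t := by
  obtain ⟨T, hT⟩ := eventually_atTop.1 hg
  have hT₀ : t₀ ≤ max T t₀ := le_max_right _ _
  refine ⟨min δ (x (max T t₀)), lt_min hδ (hpos _ hT₀), eventually_atTop.2 ⟨max T t₀, ?_⟩⟩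
  have := le_of_deriv_neg_of_eq (f := fun s => -x s) (f' := fun s => -(x s * g s))
    (fun s hs => ((hx s (hT₀.trans hs)).mono (Ici_subset_Ici.2 hT₀)).neg)
    (neg_le_neg (min_le_right _ _)) fun s hs heq => by
      have hxs : x s ≤ δ := (neg_inj.1 heq).trans_le (min_le_left _ _)
      exact neg_neg_of_pos (mul_pos (hpos s (hT₀.trans hs))
        (hT s ((le_max_left _ _).trans hs) hxs))
  exact fun t ht => neg_le_neg_iff.1 (this t ht)

end GrowthEquation

theorem HasDerivWithinAt.abs_Ici_of_eq_zero {z : ℝ → ℝ} {z' x : ℝ}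
    (hz : HasDerivWithinAt z z' (Ici x) x) (h₀ : z x = 0) :
    HasDerivWithinAt (fun t => |z t|) |z'| (Ici x) x := by
  refine HasDerivWithinAt.Ici_of_Ioi <| (hasDerivWithinAt_iff_tendsto_slope' (lt_irrefl x)).2 ?_
  refine ((hasDerivWithinAt_iff_tendsto_slope' (lt_irrefl x)).1 hz.Ioi_of_Ici).abs.congr' ?_
  filter_upwards [self_mem_nhdsWithin] with y (hy : x < y)
  simp only [slope_def_field, h₀, abs_zero, sub_zero, abs_div, abs_of_pos (sub_pos.2 hy)]

theorem mul_abs_log_sub_log_le {m x y : ℝ} (hm : 0 < m) (hx : m ≤ x) (hy : m ≤ y) :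
    m * |log x - log y| ≤ |x - y| := by
  wlog hxy : y ≤ x generalizing x y
  · rw [abs_sub_comm, abs_sub_comm x]
    exact this hy hx (le_of_not_ge hxy)
  have hy₀ : 0 < y := hm.trans_le hy
  have hx₀ : 0 < x := hy₀.trans_le hxy
  rw [abs_of_nonneg (sub_nonneg.2 (log_le_log hy₀ hxy)), abs_of_nonneg (sub_nonneg.2 hxy),
    ← log_div hx₀.ne' hy₀.ne']
  calc m * log (x / y) ≤ y * (x / y - 1) :=
        mul_le_mul hy (log_le_sub_one_of_pos (by positivity))
          (log_nonneg ((one_le_div hy₀).2 hxy)) hy₀.le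
    _ = x - y := by field_simp

theorem abs_sub_le_mul_abs_log_sub_log {M x y : ℝ} (hx : 0 < x) (hy : 0 < y) (hxM : x ≤ M)
    (hyM : y ≤ M) : |x - y| ≤ M * |log x - log y| := by
  wlog hxy : y ≤ x generalizing x y
  · rw [abs_sub_comm, abs_sub_comm (log x)]
    exact this hy hx hyM hxM (le_of_not_ge hxy)
  rw [abs_of_nonneg (sub_nonneg.2 (log_le_log hy hxy)), abs_of_nonneg (sub_nonneg.2 hxy),
    show log x - log y = -log (y / x) by rw [log_div hy.ne' hx.ne']; ring]
  calc x - y = x * -(y / x - 1) := by field_simp; ring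
    _ ≤ M * -log (y / x) :=
        mul_le_mul hxM (neg_le_neg (log_le_sub_one_of_pos (by positivity)))
          (by rw [neg_nonneg, sub_nonpos, div_le_one hx]; exact hxy) (hx.le.trans hxM)

theorem tendsto_zero_of_deriv_right_le_neg_mul {V : ℝ → ℝ} {T κ : ℝ} (hκ : 0 < κ)
    (hV : ContinuousOn V (Ici T)) (hV₀ : ∀ t, T ≤ t → 0 ≤ V t)
    (hV' : ∀ t, T ≤ t → ∃ D, HasDerivWithinAt V D (Ici t) t ∧ D ≤ -κ * V t) :
    Tendsto V atTop (𝓝 0) := by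
  choose! D hD hDle using hV'
  set B : ℝ → ℝ := fun t => (V T + 1) * exp (-(κ / 2) * (t - T))
  have hB : ∀ t, HasDerivAt B (-(κ / 2) * B t) t := fun t => by
    refine ((((hasDerivAt_id t).sub_const T).const_mul (-(κ / 2))).exp.const_mul
      (V T + 1)).congr_deriv ?_
    simp only [B, id]
    ring
  -- a strict supersolution of `V' = -κ V`, since it only decays at the rate `κ / 2`
  have hVB : ∀ t, T ≤ t → V t ≤ B t := fun t ht =>
    image_le_of_deriv_right_lt_deriv_boundary (hV.mono Icc_subset_Ici_self)
      (fun s hs => hD s hs.1) (by simp [B]) hB (fun s hs hVs => by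
        have : 0 < B s := by have := hV₀ T le_rfl; positivity
        have := hDle s hs.1
        rw [hVs] at this
        nlinarith) ⟨ht, le_rfl⟩
  have hB₀ : Tendsto B atTop (𝓝 0) := by
    have : Tendsto (fun t => -(κ / 2) * (t - T)) atTop atBot :=
      (tendsto_atTop_add_const_right _ _ tendsto_id).const_mul_atTop_of_neg (by linarith)
    have := (tendsto_exp_atBot.comp this).const_mul (V T + 1)
    rwa [mul_zero] at this
  exact squeeze_zero' (eventually_atTop.2 ⟨T, hV₀⟩) (eventually_atTop.2 ⟨T, hVB⟩) hB₀

def IsPosBounded (f : ℝ → ℝ) : Prop :=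
  BddAbove (range f) ∧ 0 < ⨅ t, f t

namespace IsPosBounded

variable {f : ℝ → ℝ}

theorem bddBelow (h : IsPosBounded f) : BddBelow (range f) := by
  by_contra hf
  exact (Real.iInf_of_not_bddBelow hf ▸ h.2).false

theorem iInf_le (h : IsPosBounded f) (t : ℝ) : ⨅ s, f s ≤ f t := ciInf_le h.bddBelow t

theorem le_iSup (h : IsPosBounded f) (t : ℝ) : f t ≤ ⨆ s, f s := le_ciSup h.1 t

theorem pos (h : IsPosBounded f) (t : ℝ) : 0 < f t := h.2.trans_le (h.iInf_le t)

theorem iInf_le_iSup (h : IsPosBounded f) : ⨅ s, f s ≤ ⨆ s, f s :=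
  (h.iInf_le 0).trans (h.le_iSup 0)

theorem iSup_pos (h : IsPosBounded f) : 0 < ⨆ s, f s := h.2.trans_le h.iInf_le_iSup

end IsPosBounded

def SolvesCompetition (a b c : ℝ → ℝ) (t₀ : ℝ) (x y : ℝ → ℝ) : Prop :=
  ∀ t ∈ Ici t₀, HasDerivWithinAt x (x t * (a t - b t * x t - c t * y t)) (Ici t₀) t

namespace SolvesCompetition

variable {a b c : ℝ → ℝ} {t₀ : ℝ} {x y : ℝ → ℝ}

theorem continuousOn (h : SolvesCompetition a b c t₀ x y) : ContinuousOn x (Ici t₀) :=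
  HasDerivWithinAt.continuousOn h

theorem pos (h : SolvesCompetition a b c t₀ x y) (ha : Continuous a) (hb : Continuous b)
    (hc : Continuous c) (hy : ContinuousOn y (Ici t₀)) (h₀ : 0 < x t₀) :
    ∀ t ∈ Ici t₀, 0 < x t :=
  pos_of_hasDerivWithinAt_mul ((ha.continuousOn.sub (hb.continuousOn.mul h.continuousOn)).sub
    (hc.continuousOn.mul hy)) h h₀

theorem eventually_le (h : SolvesCompetition a b c t₀ x y) (hx : ∀ t ∈ Ici t₀, 0 < x t)
    (hy : ∀ t ∈ Ici t₀, 0 < y t) {A B M : ℝ} (ha : ∀ t, a t ≤ A) (hb : ∀ t, B ≤ b t)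
    (hc : ∀ t, 0 ≤ c t) (hB : 0 ≤ B) (hM : 0 < M) (hAM : A < B * M) :
    ∀ᶠ t in atTop, x t ≤ M :=
  eventually_le_of_hasDerivWithinAt_mul hB hM hAM h hx fun t ht => by
    linarith [mul_le_mul_of_nonneg_right (hb t) (hx t ht).le, mul_nonneg (hc t) (hy t ht).le,
      ha t]

theorem exists_pos_eventually_le (h : SolvesCompetition a b c t₀ x y)
    (hx : ∀ t ∈ Ici t₀, 0 < x t) (hy : ∀ t ∈ Ici t₀, 0 < y t) {A B C N : ℝ}
    (ha : ∀ t, A ≤ a t) (hb : ∀ t, b t ≤ B) (hc : ∀ t, c t ≤ C) (hB : 0 < B) (hC : 0 ≤ C)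
    (hyN : ∀ᶠ t in atTop, y t ≤ N) (hCN : C * N < A) :
    ∃ m, 0 < m ∧ ∀ᶠ t in atTop, m ≤ x t := by
  have hδ : 0 < (A - C * N) / (2 * B) := by have := sub_pos.2 hCN; positivity
  refine exists_pos_eventually_le_of_hasDerivWithinAt_mul hδ h hx ?_
  filter_upwards [hyN, eventually_ge_atTop t₀] with t hyt ht hxt
  have hbx : b t * x t ≤ (A - C * N) / 2 := calc
    b t * x t ≤ B * ((A - C * N) / (2 * B)) := mul_le_mul (hb t) hxt (hx t ht).le hB.le
    _ = (A - C * N) / 2 := by field_simp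
  have hcy : c t * y t ≤ C * N := mul_le_mul (hc t) hyt (hy t ht).le hC
  linarith [ha t]

theorem exists_hasDerivWithinAt_abs_log_sub {x₁ y₁ x₂ y₂ : ℝ → ℝ}
    (h₁ : SolvesCompetition a b c t₀ x₁ y₁) (h₂ : SolvesCompetition a b c t₀ x₂ y₂) {s : ℝ}
    (hs : t₀ ≤ s) (hx₁ : 0 < x₁ s) (hx₂ : 0 < x₂ s) (hc : 0 ≤ c s) :
    ∃ D, HasDerivWithinAt (fun t => |log (x₁ t) - log (x₂ t)|) D (Ici s) s ∧
      D ≤ -(b s * |x₁ s - x₂ s|) + c s * |y₁ s - y₂ s| := by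
  have hz : HasDerivWithinAt (fun t => log (x₁ t) - log (x₂ t))
      (-(b s * (x₁ s - x₂ s)) - c s * (y₁ s - y₂ s)) (Ici s) s := by
    refine ((((h₁ s hs).log hx₁.ne').sub ((h₂ s hs).log hx₂.ne')).mono
      (Ici_subset_Ici.2 hs)).congr_deriv ?_
    field_simp
    ring
  have hcy := mul_le_mul_of_nonneg_left (le_abs_self (y₁ s - y₂ s)) hc
  have hcy' := mul_le_mul_of_nonneg_left (neg_abs_le (y₁ s - y₂ s)) hc
  -- `log x₁ - log x₂` has the sign of `x₁ - x₂`
  rcases lt_trichotomy (x₁ s) (x₂ s) with hlt | heq | hgt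
  · have hD := (hasDerivAt_abs_neg (sub_neg.2 (log_lt_log hx₁ hlt))).comp_hasDerivWithinAt s hz
    refine ⟨_, hD, ?_⟩
    rw [abs_of_neg (sub_neg.2 hlt)]
    linarith
  · refine ⟨_, hz.abs_Ici_of_eq_zero (by rw [heq, sub_self]), ?_⟩
    rw [heq, sub_self, abs_zero, mul_zero, neg_zero, zero_sub, abs_neg, abs_mul,
      abs_of_nonneg hc]
    linarith
  · have hD := (hasDerivAt_abs_pos (sub_pos.2 (log_lt_log hx₂ hgt))).comp_hasDerivWithinAt s hz
    refine ⟨_, hD, ?_⟩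
    rw [abs_of_pos (sub_pos.2 hgt)]
    linarith

end SolvesCompetition

theorem exists_lt_mul_and_mul_lt {a b c d : ℝ} (hb : 0 < b) (hc : 0 < c) (h : a * c / b < d) :
    ∃ M, a < b * M ∧ c * M < d := by
  obtain ⟨M, h₁, h₂⟩ := exists_between (show a / b < d / c by
    rw [div_lt_div_iff₀ hb hc]; rwa [div_lt_iff₀ hb] at h)
  exact ⟨M, (div_lt_iff₀' hb).1 h₁, (lt_div_iff₀' hc).1 h₂⟩

namespace LotkaVolterra

structure IsPosSolution (a₁ b₁ c₁ a₂ b₂ c₂ : ℝ → ℝ) (t₀ : ℝ) (u v : ℝ → ℝ) : Prop where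
  solves_fst : SolvesCompetition a₁ b₁ c₁ t₀ u v
  solves_snd : SolvesCompetition a₂ c₂ b₂ t₀ v u
  pos_fst : ∀ t ∈ Ici t₀, 0 < u t
  pos_snd : ∀ t ∈ Ici t₀, 0 < v t

noncomputable def lyapunov (β : ℝ) (u₁ v₁ u₂ v₂ : ℝ → ℝ) (t : ℝ) : ℝ :=
  |log (u₁ t) - log (u₂ t)| + β * |log (v₁ t) - log (v₂ t)|

variable {a₁ b₁ c₁ a₂ b₂ c₂ u v u₁ v₁ u₂ v₂ : ℝ → ℝ} {t₀ : ℝ}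

theorem IsPosSolution.of_hasDerivWithinAt (ha₁ : Continuous a₁) (hb₁ : Continuous b₁)
    (hc₁ : Continuous c₁) (ha₂ : Continuous a₂) (hb₂ : Continuous b₂) (hc₂ : Continuous c₂)
    (hsol : ∀ t ∈ Ici t₀,
      HasDerivWithinAt u (u t * (a₁ t - b₁ t * u t - c₁ t * v t)) (Ici t₀) t ∧
      HasDerivWithinAt v (v t * (a₂ t - b₂ t * u t - c₂ t * v t)) (Ici t₀) t)
    (h₀ : 0 < u t₀ ∧ 0 < v t₀) : IsPosSolution a₁ b₁ c₁ a₂ b₂ c₂ t₀ u v := by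
  have hu : SolvesCompetition a₁ b₁ c₁ t₀ u v := fun t ht => (hsol t ht).1
  have hv : SolvesCompetition a₂ c₂ b₂ t₀ v u := fun t ht => (hsol t ht).2.congr_deriv (by ring)
  exact ⟨hu, hv, hu.pos ha₁ hb₁ hc₁ hv.continuousOn h₀.1, hv.pos ha₂ hc₂ hb₂ hu.continuousOn h₀.2⟩

theorem IsPosSolution.exists_eventually_mem_box (h : IsPosSolution a₁ b₁ c₁ a₂ b₂ c₂ t₀ u v)
    (ha₁ : IsPosBounded a₁) (hb₁ : IsPosBounded b₁) (hc₁ : IsPosBounded c₁)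
    (ha₂ : IsPosBounded a₂) (hb₂ : IsPosBounded b₂) (hc₂ : IsPosBounded c₂) {Mu Mv : ℝ}
    (hMu₁ : ⨆ t, a₁ t < (⨅ t, b₁ t) * Mu) (hMu₂ : (⨆ t, b₂ t) * Mu < ⨅ t, a₂ t)
    (hMv₁ : ⨆ t, a₂ t < (⨅ t, c₂ t) * Mv) (hMv₂ : (⨆ t, c₁ t) * Mv < ⨅ t, a₁ t) :
    ∃ mu mv, 0 < mu ∧ 0 < mv ∧ ∀ᶠ t in atTop, u t ∈ Icc mu Mu ∧ v t ∈ Icc mv Mv := by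
  have hu_le := h.solves_fst.eventually_le h.pos_fst h.pos_snd ha₁.le_iSup hb₁.iInf_le
    (fun t => (hc₁.pos t).le) hb₁.2.le
    (pos_of_mul_pos_right (ha₁.iSup_pos.trans hMu₁) hb₁.2.le) hMu₁
  have hv_le := h.solves_snd.eventually_le h.pos_snd h.pos_fst ha₂.le_iSup hc₂.iInf_le
    (fun t => (hb₂.pos t).le) hc₂.2.le
    (pos_of_mul_pos_right (ha₂.iSup_pos.trans hMv₁) hc₂.2.le) hMv₁
  obtain ⟨mu, hmu, hu_ge⟩ := h.solves_fst.exists_pos_eventually_le h.pos_fst h.pos_snd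
    ha₁.iInf_le hb₁.le_iSup hc₁.le_iSup hb₁.iSup_pos hc₁.iSup_pos.le hv_le hMv₂
  obtain ⟨mv, hmv, hv_ge⟩ := h.solves_snd.exists_pos_eventually_le h.pos_snd h.pos_fst
    ha₂.iInf_le hc₂.le_iSup hb₂.le_iSup hc₂.iSup_pos hb₂.iSup_pos.le hu_le hMu₂
  refine ⟨mu, mv, hmu, hmv, ?_⟩
  filter_upwards [hu_le, hv_le, hu_ge, hv_ge] with t h₁ h₂ h₃ h₄ using ⟨⟨h₃, h₁⟩, h₄, h₂⟩

theorem continuousOn_lyapunov (β : ℝ) (h₁ : IsPosSolution a₁ b₁ c₁ a₂ b₂ c₂ t₀ u₁ v₁)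
    (h₂ : IsPosSolution a₁ b₁ c₁ a₂ b₂ c₂ t₀ u₂ v₂) :
    ContinuousOn (lyapunov β u₁ v₁ u₂ v₂) (Ici t₀) :=
  (((h₁.solves_fst.continuousOn.log fun t ht => (h₁.pos_fst t ht).ne').sub
      (h₂.solves_fst.continuousOn.log fun t ht => (h₂.pos_fst t ht).ne')).abs).add
    (continuousOn_const.mul
      (((h₁.solves_snd.continuousOn.log fun t ht => (h₁.pos_snd t ht).ne').sub
        (h₂.solves_snd.continuousOn.log fun t ht => (h₂.pos_snd t ht).ne')).abs))

theorem exists_hasDerivWithinAt_lyapunov {β s : ℝ}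
    (h₁ : IsPosSolution a₁ b₁ c₁ a₂ b₂ c₂ t₀ u₁ v₁)
    (h₂ : IsPosSolution a₁ b₁ c₁ a₂ b₂ c₂ t₀ u₂ v₂) (hs : t₀ ≤ s) (hc₁ : 0 ≤ c₁ s)
    (hb₂ : 0 ≤ b₂ s) (hβ : 0 ≤ β) :
    ∃ D, HasDerivWithinAt (lyapunov β u₁ v₁ u₂ v₂) D (Ici s) s ∧
      D ≤ -((b₁ s - β * b₂ s) * |u₁ s - u₂ s|) - (β * c₂ s - c₁ s) * |v₁ s - v₂ s| := by
  obtain ⟨Du, hDu, hDu_le⟩ := h₁.solves_fst.exists_hasDerivWithinAt_abs_log_sub h₂.solves_fst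
    hs (h₁.pos_fst s hs) (h₂.pos_fst s hs) hc₁
  obtain ⟨Dv, hDv, hDv_le⟩ := h₁.solves_snd.exists_hasDerivWithinAt_abs_log_sub h₂.solves_snd
    hs (h₁.pos_snd s hs) (h₂.pos_snd s hs) hb₂
  refine ⟨Du + β * Dv, hDu.add (hDv.const_mul β), ?_⟩
  nlinarith [mul_le_mul_of_nonneg_left hDv_le hβ]

theorem tendsto_lyapunov_zero {β m₁ m₂ : ℝ} (h₁ : IsPosSolution a₁ b₁ c₁ a₂ b₂ c₂ t₀ u₁ v₁)
    (h₂ : IsPosSolution a₁ b₁ c₁ a₂ b₂ c₂ t₀ u₂ v₂) (hb₁ : IsPosBounded b₁)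
    (hc₁ : IsPosBounded c₁) (hb₂ : IsPosBounded b₂) (hc₂ : IsPosBounded c₂)
    (hβ₁ : ⨆ t, c₁ t < β * ⨅ t, c₂ t) (hβ₂ : β * ⨆ t, b₂ t < ⨅ t, b₁ t) (hm₁ : 0 < m₁)
    (hm₂ : 0 < m₂) (hm : ∀ᶠ t in atTop, m₁ ≤ u₁ t ∧ m₁ ≤ u₂ t ∧ m₂ ≤ v₁ t ∧ m₂ ≤ v₂ t) :
    Tendsto (lyapunov β u₁ v₁ u₂ v₂) atTop (𝓝 0) := by
  have hβ : 0 < β := pos_of_mul_pos_left (hc₁.iSup_pos.trans hβ₁) hc₂.2.le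
  set k₁ := (⨅ t, b₁ t) - β * ⨆ t, b₂ t
  set k₂ := β * (⨅ t, c₂ t) - ⨆ t, c₁ t
  have hk₁ : 0 < k₁ := sub_pos.2 hβ₂
  have hk₂ : 0 < k₂ := sub_pos.2 hβ₁
  set κ := min (k₁ * m₁) (k₂ * m₂ / β)
  have hκ₁ : κ ≤ k₁ * m₁ := min_le_left _ _
  have hκ₂ : κ * β ≤ k₂ * m₂ := (le_div_iff₀ hβ).1 (min_le_right _ _)
  obtain ⟨T, hT⟩ := eventually_atTop.1 (hm.and (eventually_ge_atTop t₀))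
  refine tendsto_zero_of_deriv_right_le_neg_mul (T := max T t₀) (κ := κ)
    (lt_min (by positivity) (by positivity))
    ((continuousOn_lyapunov β h₁ h₂).mono (Ici_subset_Ici.2 (le_max_right _ _)))
    (fun t _ => by unfold lyapunov; positivity) fun s hs => ?_
  obtain ⟨⟨hu₁m, hu₂m, hv₁m, hv₂m⟩, hs₀⟩ := hT s ((le_max_left _ _).trans hs)
  obtain ⟨D, hD, hD_le⟩ := exists_hasDerivWithinAt_lyapunov h₁ h₂ hs₀ (hc₁.pos s).le
    (hb₂.pos s).le hβ.le
  refine ⟨D, hD, hD_le.trans ?_⟩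
  have hu := mul_abs_log_sub_log_le hm₁ hu₁m hu₂m
  have hv := mul_abs_log_sub_log_le hm₂ hv₁m hv₂m
  have hku : k₁ ≤ b₁ s - β * b₂ s := by
    linarith [hb₁.iInf_le s, mul_le_mul_of_nonneg_left (hb₂.le_iSup s) hβ.le]
  have hkv : k₂ ≤ β * c₂ s - c₁ s := by
    linarith [hc₁.le_iSup s, mul_le_mul_of_nonneg_left (hc₂.iInf_le s) hβ.le]
  unfold lyapunov
  nlinarith [mul_le_mul_of_nonneg_right hku (abs_nonneg (u₁ s - u₂ s)),
    mul_le_mul_of_nonneg_right hkv (abs_nonneg (v₁ s - v₂ s)),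
    mul_le_mul_of_nonneg_right hκ₁ (abs_nonneg (log (u₁ s) - log (u₂ s))),
    mul_le_mul_of_nonneg_right hκ₂ (abs_nonneg (log (v₁ s) - log (v₂ s))),
    mul_le_mul_of_nonneg_left hu hk₁.le, mul_le_mul_of_nonneg_left hv hk₂.le]

theorem iSup_mul_iSup_lt_iInf_mul_iInf (ha₁ : IsPosBounded a₁) (hb₁ : IsPosBounded b₁)
    (hc₁ : IsPosBounded c₁) (ha₂ : IsPosBounded a₂) (hb₂ : IsPosBounded b₂)
    (hc₂ : IsPosBounded c₂)
    (hcond₁ : (⨆ t, c₁ t) * (⨆ t, a₂ t) / (⨅ t, c₂ t) < ⨅ t, a₁ t)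
    (hcond₂ : (⨆ t, a₁ t) * (⨆ t, b₂ t) / (⨅ t, b₁ t) < ⨅ t, a₂ t) :
    (⨆ t, c₁ t) * (⨆ t, b₂ t) < (⨅ t, c₂ t) * (⨅ t, b₁ t) := by
  rw [div_lt_iff₀ hc₂.2] at hcond₁
  rw [div_lt_iff₀ hb₁.2] at hcond₂
  have ha₁' := ha₁.iSup_pos
  have ha₂' := ha₂.iSup_pos
  have hprod := mul_lt_mul'' hcond₁ hcond₂ (by have := hc₁.iSup_pos; positivity)
    (by have := hb₂.iSup_pos; positivity)
  have ha : (⨅ t, a₁ t) * (⨅ t, a₂ t) ≤ (⨆ t, a₁ t) * (⨆ t, a₂ t) :=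
    mul_le_mul ha₁.iInf_le_iSup ha₂.iInf_le_iSup ha₂.2.le ha₁'.le
  refine lt_of_mul_lt_mul_right (a := (⨆ t, a₁ t) * (⨆ t, a₂ t)) ?_ (by positivity)
  nlinarith [mul_le_mul_of_nonneg_left ha (mul_pos hc₂.2 hb₁.2).le]

theorem tendsto_sub_of_eventually_mem_box {mu₁ mv₁ mu₂ mv₂ Mu Mv : ℝ}
    (h₁ : IsPosSolution a₁ b₁ c₁ a₂ b₂ c₂ t₀ u₁ v₁)
    (h₂ : IsPosSolution a₁ b₁ c₁ a₂ b₂ c₂ t₀ u₂ v₂) (hb₁ : IsPosBounded b₁)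
    (hc₁ : IsPosBounded c₁) (hb₂ : IsPosBounded b₂) (hc₂ : IsPosBounded c₂)
    (hcomp : (⨆ t, c₁ t) * (⨆ t, b₂ t) < (⨅ t, c₂ t) * (⨅ t, b₁ t))
    (hmu₁ : 0 < mu₁) (hmv₁ : 0 < mv₁) (hmu₂ : 0 < mu₂) (hmv₂ : 0 < mv₂)
    (hbox₁ : ∀ᶠ t in atTop, u₁ t ∈ Icc mu₁ Mu ∧ v₁ t ∈ Icc mv₁ Mv)
    (hbox₂ : ∀ᶠ t in atTop, u₂ t ∈ Icc mu₂ Mu ∧ v₂ t ∈ Icc mv₂ Mv) :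
    Tendsto (fun t => u₁ t - u₂ t) atTop (𝓝 0) ∧
      Tendsto (fun t => v₁ t - v₂ t) atTop (𝓝 0) := by
  obtain ⟨β, hβ₁, hβ₂⟩ := exists_between
    (show (⨆ t, c₁ t) / (⨅ t, c₂ t) < (⨅ t, b₁ t) / ⨆ t, b₂ t by
      rw [div_lt_div_iff₀ hc₂.2 hb₂.iSup_pos]; linarith)
  rw [div_lt_iff₀ hc₂.2] at hβ₁
  rw [lt_div_iff₀ hb₂.iSup_pos] at hβ₂
  have hβ : 0 < β := pos_of_mul_pos_left (hc₁.iSup_pos.trans hβ₁) hc₂.2.le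
  have hbox := hbox₁.and hbox₂
  have hV := tendsto_lyapunov_zero h₁ h₂ hb₁ hc₁ hb₂ hc₂ hβ₁ hβ₂ (lt_min hmu₁ hmu₂)
    (lt_min hmv₁ hmv₂) (by
      filter_upwards [hbox] with t ⟨⟨hu₁t, hv₁t⟩, hu₂t, hv₂t⟩
      exact ⟨(min_le_left _ _).trans hu₁t.1, (min_le_right _ _).trans hu₂t.1,
        (min_le_left _ _).trans hv₁t.1, (min_le_right _ _).trans hv₂t.1⟩)
  constructor
  · refine squeeze_zero_norm' ?_ (by simpa using hV.const_mul Mu)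
    filter_upwards [hbox] with t ⟨⟨hu₁t, _⟩, hu₂t, _⟩
    have hMu : 0 ≤ Mu := (hmu₁.trans_le hu₁t.1).le.trans hu₁t.2
    calc ‖u₁ t - u₂ t‖ ≤ Mu * |log (u₁ t) - log (u₂ t)| :=
          abs_sub_le_mul_abs_log_sub_log (hmu₁.trans_le hu₁t.1) (hmu₂.trans_le hu₂t.1)
            hu₁t.2 hu₂t.2
      _ ≤ Mu * lyapunov β u₁ v₁ u₂ v₂ t := by
          unfold lyapunov; gcongr; exact le_add_of_nonneg_right (by positivity)
  · refine squeeze_zero_norm' ?_ (by simpa using hV.const_mul (Mv / β))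
    filter_upwards [hbox] with t ⟨⟨_, hv₁t⟩, _, hv₂t⟩
    have hMv : 0 ≤ Mv := (hmv₁.trans_le hv₁t.1).le.trans hv₁t.2
    calc ‖v₁ t - v₂ t‖ ≤ Mv / β * (β * |log (v₁ t) - log (v₂ t)|) := by
          rw [← mul_assoc, div_mul_cancel₀ _ hβ.ne']
          exact abs_sub_le_mul_abs_log_sub_log (hmv₁.trans_le hv₁t.1) (hmv₂.trans_le hv₂t.1)
            hv₁t.2 hv₂t.2
      _ ≤ Mv / β * lyapunov β u₁ v₁ u₂ v₂ t := by
          unfold lyapunov; gcongr; exact le_add_of_nonneg_left (abs_nonneg _)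

end LotkaVolterra

open LotkaVolterra

/-- For the nonautonomous Lotka–Volterra competition system with coefficients
bounded above and below by positive constants and satisfying
`a₁^L > c₁^M a₂^M / c₂^L` and `a₂^L > a₁^M b₂^M / b₁^L`, any two solutions on `[t₀, ∞)`
with positive initial values at `t₀` approach each other:
`u₁(t) − u₂(t) → 0` and `v₁(t) − v₂(t) → 0` as `t → ∞`. -/
theorem lotka_volterra_solutions_approach_each_other
    (a₁ b₁ c₁ a₂ b₂ c₂ : ℝ → ℝ)
    (ha₁ : Continuous a₁) (hb₁ : Continuous b₁) (hc₁ : Continuous c₁)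
    (ha₂ : Continuous a₂) (hb₂ : Continuous b₂) (hc₂ : Continuous c₂)
    (ha₁B : BddAbove (Set.range a₁)) (hb₁B : BddAbove (Set.range b₁))
    (hc₁B : BddAbove (Set.range c₁)) (ha₂B : BddAbove (Set.range a₂))
    (hb₂B : BddAbove (Set.range b₂)) (hc₂B : BddAbove (Set.range c₂))
    (ha₁pos : 0 < ⨅ t, a₁ t) (hb₁pos : 0 < ⨅ t, b₁ t) (hc₁pos : 0 < ⨅ t, c₁ t)
    (ha₂pos : 0 < ⨅ t, a₂ t) (hb₂pos : 0 < ⨅ t, b₂ t) (hc₂pos : 0 < ⨅ t, c₂ t)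
    (hcond₁ : (⨆ t, c₁ t) * (⨆ t, a₂ t) / (⨅ t, c₂ t) < ⨅ t, a₁ t)
    (hcond₂ : (⨆ t, a₁ t) * (⨆ t, b₂ t) / (⨅ t, b₁ t) < ⨅ t, a₂ t)
    (t₀ : ℝ) (u₁ v₁ u₂ v₂ : ℝ → ℝ)
    (hsol₁ : ∀ t ∈ Set.Ici t₀,
      HasDerivWithinAt u₁ (u₁ t * (a₁ t - b₁ t * u₁ t - c₁ t * v₁ t)) (Set.Ici t₀) t ∧
      HasDerivWithinAt v₁ (v₁ t * (a₂ t - b₂ t * u₁ t - c₂ t * v₁ t)) (Set.Ici t₀) t)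
    (hsol₂ : ∀ t ∈ Set.Ici t₀,
      HasDerivWithinAt u₂ (u₂ t * (a₁ t - b₁ t * u₂ t - c₁ t * v₂ t)) (Set.Ici t₀) t ∧
      HasDerivWithinAt v₂ (v₂ t * (a₂ t - b₂ t * u₂ t - c₂ t * v₂ t)) (Set.Ici t₀) t)
    (hpos₁ : 0 < u₁ t₀ ∧ 0 < v₁ t₀) (hpos₂ : 0 < u₂ t₀ ∧ 0 < v₂ t₀) :
    Filter.Tendsto (fun t => u₁ t - u₂ t) Filter.atTop (nhds 0) ∧
    Filter.Tendsto (fun t => v₁ t - v₂ t) Filter.atTop (nhds 0) := by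
  have hA₁ : IsPosBounded a₁ := ⟨ha₁B, ha₁pos⟩
  have hB₁ : IsPosBounded b₁ := ⟨hb₁B, hb₁pos⟩
  have hC₁ : IsPosBounded c₁ := ⟨hc₁B, hc₁pos⟩
  have hA₂ : IsPosBounded a₂ := ⟨ha₂B, ha₂pos⟩
  have hB₂ : IsPosBounded b₂ := ⟨hb₂B, hb₂pos⟩
  have hC₂ : IsPosBounded c₂ := ⟨hc₂B, hc₂pos⟩
  have h₁ := IsPosSolution.of_hasDerivWithinAt ha₁ hb₁ hc₁ ha₂ hb₂ hc₂ hsol₁ hpos₁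
  have h₂ := IsPosSolution.of_hasDerivWithinAt ha₁ hb₁ hc₁ ha₂ hb₂ hc₂ hsol₂ hpos₂
  obtain ⟨Mu, hMu₁, hMu₂⟩ := exists_lt_mul_and_mul_lt hB₁.2 hB₂.iSup_pos hcond₂
  obtain ⟨Mv, hMv₁, hMv₂⟩ :=
    exists_lt_mul_and_mul_lt hC₂.2 hC₁.iSup_pos (by rwa [mul_comm] at hcond₁)
  obtain ⟨mu₁, mv₁, hmu₁, hmv₁, hbox₁⟩ :=
    h₁.exists_eventually_mem_box hA₁ hB₁ hC₁ hA₂ hB₂ hC₂ hMu₁ hMu₂ hMv₁ hMv₂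
  obtain ⟨mu₂, mv₂, hmu₂, hmv₂, hbox₂⟩ :=
    h₂.exists_eventually_mem_box hA₁ hB₁ hC₁ hA₂ hB₂ hC₂ hMu₁ hMu₂ hMv₁ hMv₂
  exact tendsto_sub_of_eventually_mem_box h₁ h₂ hB₁ hC₁ hB₂ hC₂
    (iSup_mul_iSup_lt_iInf_mul_iInf hA₁ hB₁ hC₁ hA₂ hB₂ hC₂ hcond₁ hcond₂)
    hmu₁ hmv₁ hmu₂ hmv₂ hbox₁ hbox₂
end

section
/- For every t₀ ∈ ℝ there exists a solution (u₀(t), v₀(t)) of the Lotka–Volterra competition system defined for all t ≥ t₀ such that 0 < (a₁^L c₂^L − c₁^M a₂^M)/(b₁^M c₂^L − c₁^M b₂^L) ≤ u₀(t) ≤ (a₁^M c₂^M − c₁^L a₂^L)/(b₁^L c₂^M − c₁^L b₂^M) and 0 < (b₁^L a₂^L − a₁^M b₂^M)/(b₁^L c₂^M − c₁^L b₂^M) ≤ v₀(t) ≤ (b₁^M a₂^M − a₁^L b₂^L)/(b₁^M c₂^L − c₁^M b₂^L) for all t ≥ t₀. -/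
/-!
The rectangle `[uL, uM] × [vL, vM]` whose corners `(uL, vM)` and `(uM, vL)` solve the extreme
linear systems `b₁ᴹ u + c₁ᴹ v = a₁ᴸ, b₂ᴸ u + c₂ᴸ v = a₂ᴹ` and `b₁ᴸ u + c₁ᴸ v = a₁ᴹ,
b₂ᴹ u + c₂ᴹ v = a₂ᴸ` is positively invariant: on each of its edges the vector field points
inwards for all coefficient values within the bounds. The two hypotheses force weak competition,
`c₁ᴹ b₂ᴹ < b₁ᴸ c₂ᴸ`, which makes the corners positive and correctly ordered.

To get a solution, compose the field with the nearest-point retraction onto the rectangle. The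
result is bounded and globally Lipschitz, so Picard–Lindelöf on every `[t₀, T]` together with
uniqueness yields a solution on `[t₀, ∞)`. A barrier argument keeps it inside the rectangle, where
the modified field is the original one.
-/

open Set NNReal Topology

section LipschitzField

variable {E : Type*} [NormedAddCommGroup E] [NormedSpace ℝ E] {f : ℝ → E → E} {K : ℝ≥0}
  {L : ℝ}

theorem exists_forall_mem_Icc_hasDerivWithinAt_of_lipschitzWith [CompleteSpace E]
    (hcont : ∀ x, Continuous (f · x)) (hlip : ∀ t, LipschitzWith K (f t))
    (hbdd : ∀ t x, ‖f t x‖ ≤ L) (x₀ : E) (t₀ t₁ : ℝ) :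
    ∃ α : ℝ → E, α t₀ = x₀ ∧
      ∀ t ∈ Icc t₀ t₁, HasDerivWithinAt α (f t (α t)) (Icc t₀ t₁) t := by
  set T := max t₀ t₁
  have hpl : IsPicardLindelof f (tmin := t₀) (tmax := T) ⟨t₀, left_mem_Icc.2 (le_max_left _ _)⟩
      x₀ (L.toNNReal * (T - t₀).toNNReal) 0 L.toNNReal K :=
    { lipschitzOnWith := fun t _ => (hlip t).lipschitzOnWith
      continuousOn := fun x _ => (hcont x).continuousOn
      norm_le := fun t _ x _ => (hbdd t x).trans (Real.le_coe_toNNReal L)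
      mul_max_le := by simp [T] }
  obtain ⟨α, hα₀, hα⟩ := hpl.exists_eq_forall_mem_Icc_hasDerivWithinAt₀
  have hsub : Icc t₀ t₁ ⊆ Icc t₀ T := Icc_subset_Icc_right (le_max_right _ _)
  exact ⟨α, hα₀, fun t ht => (hα t (hsub ht)).mono hsub⟩

theorem eqOn_Icc_of_hasDerivWithinAt_of_lipschitzWith (hlip : ∀ t, LipschitzWith K (f t))
    {α β : ℝ → E} {a b b' : ℝ}
    (hα : ∀ t ∈ Icc a b, HasDerivWithinAt α (f t (α t)) (Icc a b) t)
    (hβ : ∀ t ∈ Icc a b', HasDerivWithinAt β (f t (β t)) (Icc a b') t) (ha : α a = β a) :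
    EqOn α β (Icc a (min b b')) := by
  have hsub : Icc a (min b b') ⊆ Icc a b := Icc_subset_Icc_right (min_le_left _ _)
  have hsub' : Icc a (min b b') ⊆ Icc a b' := Icc_subset_Icc_right (min_le_right _ _)
  refine ODE_solution_unique_of_mem_Icc_right (s := fun _ => univ)
    (fun t _ => (hlip t).lipschitzOnWith)
    (fun t ht => (hα t (hsub ht)).continuousWithinAt.mono hsub)
    (fun t ht => (hα t (hsub (Ico_subset_Icc_self ht))).mono_of_mem_nhdsWithin
      (Icc_mem_nhdsGE_of_mem ⟨ht.1, ht.2.trans_le (min_le_left _ _)⟩))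
    (fun _ _ => mem_univ _)
    (fun t ht => (hβ t (hsub' ht)).continuousWithinAt.mono hsub')
    (fun t ht => (hβ t (hsub' (Ico_subset_Icc_self ht))).mono_of_mem_nhdsWithin
      (Icc_mem_nhdsGE_of_mem ⟨ht.1, ht.2.trans_le (min_le_right _ _)⟩))
    (fun _ _ => mem_univ _) ha

theorem exists_forall_mem_Ici_hasDerivWithinAt_of_lipschitzWith [CompleteSpace E]
    (hcont : ∀ x, Continuous (f · x)) (hlip : ∀ t, LipschitzWith K (f t))
    (hbdd : ∀ t x, ‖f t x‖ ≤ L) (x₀ : E) (t₀ : ℝ) :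
    ∃ α : ℝ → E, α t₀ = x₀ ∧ ∀ t ∈ Ici t₀, HasDerivWithinAt α (f t (α t)) (Ici t₀) t := by
  choose sol hsol₀ hsol using
    exists_forall_mem_Icc_hasDerivWithinAt_of_lipschitzWith hcont hlip hbdd x₀ t₀
  have hglue : ∀ T, EqOn (fun t => sol (t + 1) t) (sol T) (Icc t₀ T) := fun T s hs =>
    eqOn_Icc_of_hasDerivWithinAt_of_lipschitzWith hlip (hsol (s + 1)) (hsol T)
      ((hsol₀ _).trans (hsol₀ _).symm) ⟨hs.1, le_min (by linarith) hs.2⟩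
  refine ⟨fun t => sol (t + 1) t, hsol₀ _, fun t ht => ?_⟩
  have hmem : Icc t₀ (t + 1) ∈ 𝓝[Ici t₀] t := by
    rw [← Ici_inter_Iic]
    exact inter_mem_nhdsWithin _ (Iic_mem_nhds (by linarith))
  exact ((hsol (t + 1) t ⟨ht, by linarith⟩).congr (hglue _) (hglue _ ⟨ht, by linarith⟩))
    |>.mono_of_mem_nhdsWithin hmem

end LipschitzField

theorem HasDerivWithinAt.fst {𝕜 E F : Type*} [NontriviallyNormedField 𝕜]
    [NormedAddCommGroup E] [NormedSpace 𝕜 E] [NormedAddCommGroup F] [NormedSpace 𝕜 F]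
    {f : 𝕜 → E × F} {f' : E × F} {s : Set 𝕜} {x : 𝕜}
    (h : HasDerivWithinAt f f' s x) : HasDerivWithinAt (fun t => (f t).1) f'.1 s x :=
  (hasFDerivAt_fst (𝕜 := 𝕜) (p := f x)).comp_hasDerivWithinAt x h

theorem HasDerivWithinAt.snd {𝕜 E F : Type*} [NontriviallyNormedField 𝕜]
    [NormedAddCommGroup E] [NormedSpace 𝕜 E] [NormedAddCommGroup F] [NormedSpace 𝕜 F]
    {f : 𝕜 → E × F} {f' : E × F} {s : Set 𝕜} {x : 𝕜}
    (h : HasDerivWithinAt f f' s x) : HasDerivWithinAt (fun t => (f t).2) f'.2 s x :=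
  (hasFDerivAt_snd (𝕜 := 𝕜) (p := f x)).comp_hasDerivWithinAt x h

theorem le_of_hasDerivWithinAt_Ici {u u' : ℝ → ℝ} {t₀ M : ℝ}
    (hu : ∀ t ∈ Ici t₀, HasDerivWithinAt u (u' t) (Ici t₀) t) (h₀ : u t₀ ≤ M)
    (hM : ∀ t ∈ Ici t₀, M ≤ u t → u' t ≤ 0) : ∀ t ∈ Ici t₀, u t ≤ M := by
  intro t ht
  -- compare `u` with the barriers `M + ε (s - t₀)` and let `ε → 0`
  have hε : ∀ ε ∈ Ioi (0 : ℝ), u t ≤ M + ε * (t - t₀) := fun ε hε =>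
    image_le_of_deriv_right_lt_deriv_boundary (B := fun s => M + ε * (s - t₀)) (B' := fun _ => ε)
      (fun s hs => (hu s hs.1).continuousWithinAt.mono Icc_subset_Ici_self)
      (fun s hs => (hu s hs.1).mono (Ici_subset_Ici.2 hs.1)) (by simpa using h₀)
      (fun s => by simpa using ((hasDerivAt_id s).sub_const t₀).const_mul ε |>.const_add M)
      (fun s hs hs' => (hM s hs.1 (hs' ▸ le_add_of_nonneg_right
        (mul_nonneg (le_of_lt hε) (sub_nonneg.2 hs.1)))).trans_lt hε)
      ⟨ht, le_rfl⟩
  have hcont : ContinuousWithinAt (fun ε => M + ε * (t - t₀)) (Ioi 0) 0 := by fun_prop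
  simpa using continuousWithinAt_const.closure_le (by simp) hcont hε

theorem mem_Icc_of_hasDerivWithinAt_Ici {u u' : ℝ → ℝ} {t₀ m M : ℝ}
    (hu : ∀ t ∈ Ici t₀, HasDerivWithinAt u (u' t) (Ici t₀) t) (h₀ : u t₀ ∈ Icc m M)
    (hm : ∀ t ∈ Ici t₀, u t ≤ m → 0 ≤ u' t) (hM : ∀ t ∈ Ici t₀, M ≤ u t → u' t ≤ 0) :
    ∀ t ∈ Ici t₀, u t ∈ Icc m M := by
  have hneg := le_of_hasDerivWithinAt_Ici (u := -u) (u' := -u') (M := -m)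
    (fun t ht => (hu t ht).neg) (neg_le_neg h₀.1)
    (fun t ht h => neg_nonpos.2 (hm t ht (neg_le_neg_iff.1 h)))
  exact fun t ht => ⟨neg_le_neg_iff.1 (hneg t ht), le_of_hasDerivWithinAt_Ici hu h₀.2 hM t ht⟩

theorem exists_forall_mem_Ici_hasDerivWithinAt_mem_Icc_prod {f : ℝ → ℝ × ℝ → ℝ × ℝ}
    {p₁ q₁ p₂ q₂ : ℝ} {K : ℝ≥0} {L : ℝ}
    (hcont : ∀ x ∈ Icc p₁ q₁ ×ˢ Icc p₂ q₂, Continuous (f · x))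
    (hlip : ∀ t, LipschitzOnWith K (f t) (Icc p₁ q₁ ×ˢ Icc p₂ q₂))
    (hbdd : ∀ t, ∀ x ∈ Icc p₁ q₁ ×ˢ Icc p₂ q₂, ‖f t x‖ ≤ L)
    (hp₁ : ∀ t, ∀ y ∈ Icc p₂ q₂, 0 ≤ (f t (p₁, y)).1)
    (hq₁ : ∀ t, ∀ y ∈ Icc p₂ q₂, (f t (q₁, y)).1 ≤ 0)
    (hp₂ : ∀ t, ∀ x ∈ Icc p₁ q₁, 0 ≤ (f t (x, p₂)).2)
    (hq₂ : ∀ t, ∀ x ∈ Icc p₁ q₁, (f t (x, q₂)).2 ≤ 0)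
    {x₀ : ℝ × ℝ} (hx₀ : x₀ ∈ Icc p₁ q₁ ×ˢ Icc p₂ q₂) (t₀ : ℝ) :
    ∃ α : ℝ → ℝ × ℝ, α t₀ = x₀ ∧ ∀ t ∈ Ici t₀,
      HasDerivWithinAt α (f t (α t)) (Ici t₀) t ∧ α t ∈ Icc p₁ q₁ ×ˢ Icc p₂ q₂ := by
  have h₁ : p₁ ≤ q₁ := hx₀.1.1.trans hx₀.1.2
  have h₂ : p₂ ≤ q₂ := hx₀.2.1.trans hx₀.2.2
  -- the nearest-point retraction onto the rectangle makes `f` globally Lipschitz and bounded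
  set π : ℝ × ℝ → ℝ × ℝ := fun x => (projIcc p₁ q₁ h₁ x.1, projIcc p₂ q₂ h₂ x.2)
  have hπ : ∀ x, π x ∈ Icc p₁ q₁ ×ˢ Icc p₂ q₂ := fun x =>
    ⟨(projIcc p₁ q₁ h₁ x.1).2, (projIcc p₂ q₂ h₂ x.2).2⟩
  have hπ_lip : LipschitzWith 1 π := by
    have hπ₁ := (LipschitzWith.subtype_val _).comp (LipschitzWith.projIcc h₁)
    have hπ₂ := (LipschitzWith.subtype_val _).comp (LipschitzWith.projIcc h₂)
    simpa using (hπ₁.comp LipschitzWith.prod_fst).prodMk (hπ₂.comp LipschitzWith.prod_snd)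
  obtain ⟨α, hα₀, hα⟩ := exists_forall_mem_Ici_hasDerivWithinAt_of_lipschitzWith
    (f := fun t x => f t (π x)) (K := K * 1) (fun x => hcont _ (hπ x))
    (fun t => lipschitzOnWith_univ.1 ((hlip t).comp hπ_lip.lipschitzOnWith fun x _ => hπ x))
    (fun t x => hbdd t _ (hπ x)) x₀ t₀
  have hα₁ : ∀ t ∈ Ici t₀, (α t).1 ∈ Icc p₁ q₁ :=
    mem_Icc_of_hasDerivWithinAt_Ici (u := fun t => (α t).1)
      (fun t ht => (hα t ht).fst) (hα₀ ▸ hx₀.1)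
      (fun t _ h => by simpa [π, projIcc_of_le_left h₁ h] using hp₁ t _ (hπ (α t)).2)
      (fun t _ h => by simpa [π, projIcc_of_right_le h₁ h] using hq₁ t _ (hπ (α t)).2)
  have hα₂ : ∀ t ∈ Ici t₀, (α t).2 ∈ Icc p₂ q₂ :=
    mem_Icc_of_hasDerivWithinAt_Ici (u := fun t => (α t).2)
      (fun t ht => (hα t ht).snd) (hα₀ ▸ hx₀.2)
      (fun t _ h => by simpa [π, projIcc_of_le_left h₂ h] using hp₂ t _ (hπ (α t)).1)
      (fun t _ h => by simpa [π, projIcc_of_right_le h₂ h] using hq₂ t _ (hπ (α t)).1)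
  have hπα : ∀ t ∈ Ici t₀, π (α t) = α t := fun t ht => by
    simp [π, projIcc_of_mem _ (hα₁ t ht), projIcc_of_mem _ (hα₂ t ht)]
  exact ⟨α, hα₀, fun t ht => ⟨hπα t ht ▸ hα t ht, hα₁ t ht, hα₂ t ht⟩⟩

theorem ContDiff.exists_forall_lipschitzOnWith {P E F : Type*} [NormedAddCommGroup P]
    [NormedSpace ℝ P] [NormedAddCommGroup E] [NormedSpace ℝ E] [NormedAddCommGroup F]
    [NormedSpace ℝ F] {Φ : P × E → F} (hΦ : ContDiff ℝ 1 Φ) {C : Set P} {K : Set E}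
    (hC : IsCompact C) (hCc : Convex ℝ C) (hK : IsCompact K) (hKc : Convex ℝ K) :
    ∃ L, ∀ c ∈ C, LipschitzOnWith L (fun x => Φ (c, x)) K := by
  obtain ⟨L, hL⟩ := hΦ.contDiffOn.exists_lipschitzOnWith one_ne_zero (hCc.prod hKc) (hC.prod hK)
  refine ⟨L, fun c hc => LipschitzOnWith.of_dist_le_mul fun x hx y hy => ?_⟩
  simpa [Prod.dist_eq] using hL.dist_le_mul (c, x) ⟨hc, hx⟩ (c, y) ⟨hc, hy⟩

lemma sub_sub_le_sub_sub {a b c x y a' b' c' x' y' : ℝ} (ha : a' ≤ a) (hb : b ≤ b') (hc : c ≤ c')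
    (hb₀ : 0 ≤ b) (hc₀ : 0 ≤ c) (hx₀ : 0 ≤ x) (hy₀ : 0 ≤ y) (hx : x ≤ x') (hy : y ≤ y') :
    a' - b' * x' - c' * y' ≤ a - b * x - c * y := by
  gcongr <;> linarith

lemma cramer_two_by_two {a b c d e f : ℝ} (h : a * d - b * c ≠ 0) :
    a * ((e * d - b * f) / (a * d - b * c)) + b * ((a * f - e * c) / (a * d - b * c)) = e ∧
      c * ((e * d - b * f) / (a * d - b * c)) + d * ((a * f - e * c) / (a * d - b * c)) = f := by
  constructor <;> rw [mul_div_assoc', mul_div_assoc', ← add_div, div_eq_iff h] <;> ring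

theorem lotkaVolterra_weak_competition {a₁L a₁M a₂L a₂M b₁L b₂M c₁M c₂L : ℝ}
    (ha₁ : 0 < a₁L) (ha₂ : 0 < a₂L) (hb₁ : 0 ≤ b₁L) (hc₂ : 0 ≤ c₂L) (hc₁ : 0 ≤ c₁M)
    (hb₂ : 0 ≤ b₂M) (ha₁' : a₁L ≤ a₁M) (ha₂' : a₂L ≤ a₂M) (h₁ : c₁M * a₂M < a₁L * c₂L)
    (h₂ : a₁M * b₂M < b₁L * a₂L) : c₁M * b₂M < b₁L * c₂L := by
  have ha₁M : 0 < a₁M := ha₁.trans_le ha₁'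
  have ha₂M : 0 < a₂M := ha₂.trans_le ha₂'
  refine lt_of_mul_lt_mul_left ?_ (by positivity : 0 ≤ a₁M * a₂M)
  calc a₁M * a₂M * (c₁M * b₂M) = (c₁M * a₂M) * (a₁M * b₂M) := by ring
    _ < (a₁L * c₂L) * (b₁L * a₂L) := mul_lt_mul'' h₁ h₂ (by positivity) (by positivity)
    _ = (a₁L * a₂L) * (b₁L * c₂L) := by ring
    _ ≤ a₁M * a₂M * (b₁L * c₂L) :=
      mul_le_mul_of_nonneg_right (mul_le_mul ha₁' ha₂' ha₂.le ha₁M.le) (by positivity)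

theorem lotkaVolterra_corners
    {a₁L a₁M b₁L b₁M c₁L c₁M a₂L a₂M b₂L b₂M c₂L c₂M uL uM vL vM : ℝ}
    (ha₁ : 0 < a₁L) (hb₁ : 0 < b₁L) (hc₁ : 0 < c₁L) (ha₂ : 0 < a₂L) (hb₂ : 0 < b₂L)
    (hc₂ : 0 < c₂L) (ha₁' : a₁L ≤ a₁M) (hb₁' : b₁L ≤ b₁M) (hc₁' : c₁L ≤ c₁M)
    (ha₂' : a₂L ≤ a₂M) (hb₂' : b₂L ≤ b₂M) (hc₂' : c₂L ≤ c₂M)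
    (h₁ : c₁M * a₂M / c₂L < a₁L) (h₂ : a₁M * b₂M / b₁L < a₂L)
    (huL : uL = (a₁L * c₂L - c₁M * a₂M) / (b₁M * c₂L - c₁M * b₂L))
    (huM : uM = (a₁M * c₂M - c₁L * a₂L) / (b₁L * c₂M - c₁L * b₂M))
    (hvL : vL = (b₁L * a₂L - a₁M * b₂M) / (b₁L * c₂M - c₁L * b₂M))
    (hvM : vM = (b₁M * a₂M - a₁L * b₂L) / (b₁M * c₂L - c₁M * b₂L)) :
    0 < uL ∧ 0 < vL ∧ uL ≤ uM ∧ vL ≤ vM ∧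
      b₁M * uL + c₁M * vM = a₁L ∧ b₂L * uL + c₂L * vM = a₂M ∧
      b₁L * uM + c₁L * vL = a₁M ∧ b₂M * uM + c₂M * vL = a₂L := by
  rw [div_lt_iff₀ hc₂] at h₁
  rw [div_lt_iff₀' hb₁] at h₂
  have ha₁M : 0 < a₁M := ha₁.trans_le ha₁'
  have hc₁M : 0 < c₁M := hc₁.trans_le hc₁'
  have hb₂M : 0 < b₂M := hb₂.trans_le hb₂'
  have hweak := lotkaVolterra_weak_competition ha₁ ha₂ hb₁.le hc₂.le hc₁M.le hb₂M.le ha₁' ha₂'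
    h₁ h₂
  have hD : 0 < b₁M * c₂L - c₁M * b₂L := by
    linarith [mul_le_mul_of_nonneg_right hb₁' hc₂.le, mul_le_mul_of_nonneg_left hb₂' hc₁M.le]
  have hD' : 0 < b₁L * c₂M - c₁L * b₂M := by
    linarith [mul_le_mul_of_nonneg_left hc₂' hb₁.le, mul_le_mul_of_nonneg_right hc₁' hb₂M.le]
  obtain ⟨I₁, I₂⟩ := cramer_two_by_two (e := a₁L) (f := a₂M) hD.ne'
  obtain ⟨I₃, I₄⟩ := cramer_two_by_two (e := a₁M) (f := a₂L) hD'.ne'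
  rw [← huL, ← hvM] at I₁ I₂
  rw [← huM, ← hvL] at I₃ I₄
  have huL₀ : 0 < uL := huL ▸ div_pos (by linarith) hD
  have hvL₀ : 0 < vL := hvL ▸ div_pos (by linarith) hD'
  have hvM₀ : 0 ≤ vM := hvM ▸ div_nonneg (by
    linarith [mul_le_mul hb₁' ha₂' ha₂.le (hb₁.trans_le hb₁').le,
      mul_le_mul ha₁' hb₂' hb₂.le ha₁M.le]) hD.le
  -- the two corner equations of each species, compared coefficientwise
  have hu : c₁L * (vM - vL) ≤ b₁L * (uM - uL) := by
    linarith [mul_le_mul_of_nonneg_right hb₁' huL₀.le, mul_le_mul_of_nonneg_right hc₁' hvM₀]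
  have hv : b₂M * (uM - uL) ≤ c₂L * (vM - vL) := by
    linarith [mul_le_mul_of_nonneg_right hb₂' huL₀.le, mul_le_mul_of_nonneg_right hc₂' hvL₀.le]
  have huu : uL ≤ uM := by
    have hpos : 0 < b₁L * c₂L - c₁L * b₂M := by
      linarith [mul_le_mul_of_nonneg_right hc₁' hb₂M.le]
    by_contra! h
    linarith [mul_le_mul_of_nonneg_left hu hc₂.le, mul_le_mul_of_nonneg_left hv hc₁.le,
      mul_pos hpos (sub_pos.2 h)]
  have hvv : vL ≤ vM := by
    by_contra! h
    linarith [mul_nonneg hb₂M.le (sub_nonneg.2 huu), mul_pos hc₂ (sub_pos.2 h)]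
  exact ⟨huL₀, hvL₀, huu, hvv, I₁, I₂, I₃, I₄⟩

def lotkaVolterraField (a₁ b₁ c₁ a₂ b₂ c₂ : ℝ → ℝ) (t : ℝ) (x : ℝ × ℝ) : ℝ × ℝ :=
  (x.1 * (a₁ t - b₁ t * x.1 - c₁ t * x.2), x.2 * (a₂ t - b₂ t * x.1 - c₂ t * x.2))

theorem exists_lipschitzOnWith_lotkaVolterraField {a₁ b₁ c₁ a₂ b₂ c₂ : ℝ → ℝ}
    {a₁L a₁M b₁L b₁M c₁L c₁M a₂L a₂M b₂L b₂M c₂L c₂M : ℝ}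
    (ha₁B : ∀ t, a₁ t ∈ Icc a₁L a₁M) (hb₁B : ∀ t, b₁ t ∈ Icc b₁L b₁M)
    (hc₁B : ∀ t, c₁ t ∈ Icc c₁L c₁M) (ha₂B : ∀ t, a₂ t ∈ Icc a₂L a₂M)
    (hb₂B : ∀ t, b₂ t ∈ Icc b₂L b₂M) (hc₂B : ∀ t, c₂ t ∈ Icc c₂L c₂M)
    {R : Set (ℝ × ℝ)} (hR : IsCompact R) (hRc : Convex ℝ R) :
    ∃ (K : ℝ≥0) (L : ℝ), ∀ t, LipschitzOnWith K (lotkaVolterraField a₁ b₁ c₁ a₂ b₂ c₂ t) R ∧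
      ∀ x ∈ R, ‖lotkaVolterraField a₁ b₁ c₁ a₂ b₂ c₂ t x‖ ≤ L := by
  -- the field is a smooth function of the state and of the coefficients, which range over a box
  set Φ : ((ℝ × ℝ × ℝ) × ℝ × ℝ × ℝ) × (ℝ × ℝ) → ℝ × ℝ := fun z =>
    (z.2.1 * (z.1.1.1 - z.1.1.2.1 * z.2.1 - z.1.1.2.2 * z.2.2),
      z.2.2 * (z.1.2.1 - z.1.2.2.1 * z.2.1 - z.1.2.2.2 * z.2.2))
  set C := Icc ((a₁L, b₁L, c₁L), (a₂L, b₂L, c₂L)) ((a₁M, b₁M, c₁M), (a₂M, b₂M, c₂M))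
  have hΦ : ContDiff ℝ 1 Φ := by fun_prop
  have hcoeff : ∀ t, ((a₁ t, b₁ t, c₁ t), (a₂ t, b₂ t, c₂ t)) ∈ C := fun t =>
    ⟨⟨⟨(ha₁B t).1, (hb₁B t).1, (hc₁B t).1⟩, ⟨(ha₂B t).1, (hb₂B t).1, (hc₂B t).1⟩⟩,
      ⟨⟨(ha₁B t).2, (hb₁B t).2, (hc₁B t).2⟩, ⟨(ha₂B t).2, (hb₂B t).2, (hc₂B t).2⟩⟩⟩
  obtain ⟨K, hK⟩ := hΦ.exists_forall_lipschitzOnWith isCompact_Icc (convex_Icc _ _) hR hRc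
  obtain ⟨L, hL⟩ := (isCompact_Icc.prod hR).exists_bound_of_continuousOn
    (hΦ.continuous.continuousOn (s := C ×ˢ R))
  have hΦ_eq : ∀ t, (fun x => Φ (((a₁ t, b₁ t, c₁ t), (a₂ t, b₂ t, c₂ t)), x)) =
      lotkaVolterraField a₁ b₁ c₁ a₂ b₂ c₂ t := fun t => rfl
  refine ⟨K, L, fun t => ⟨hΦ_eq t ▸ hK _ (hcoeff t), fun x hx => ?_⟩⟩
  rw [← hΦ_eq t]
  exact hL _ ⟨hcoeff t, hx⟩

theorem lotkaVolterra_exists_solution_mem_Icc {a₁ b₁ c₁ a₂ b₂ c₂ : ℝ → ℝ}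
    (ha₁ : Continuous a₁) (hb₁ : Continuous b₁) (hc₁ : Continuous c₁)
    (ha₂ : Continuous a₂) (hb₂ : Continuous b₂) (hc₂ : Continuous c₂)
    {a₁L a₁M b₁L b₁M c₁L c₁M a₂L a₂M b₂L b₂M c₂L c₂M : ℝ}
    (ha₁B : ∀ t, a₁ t ∈ Icc a₁L a₁M) (hb₁B : ∀ t, b₁ t ∈ Icc b₁L b₁M)
    (hc₁B : ∀ t, c₁ t ∈ Icc c₁L c₁M) (ha₂B : ∀ t, a₂ t ∈ Icc a₂L a₂M)
    (hb₂B : ∀ t, b₂ t ∈ Icc b₂L b₂M) (hc₂B : ∀ t, c₂ t ∈ Icc c₂L c₂M)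
    (hb₁L : 0 ≤ b₁L) (hc₁L : 0 ≤ c₁L) (hb₂L : 0 ≤ b₂L) (hc₂L : 0 ≤ c₂L)
    {uL uM vL vM : ℝ} (huL : 0 ≤ uL) (hvL : 0 ≤ vL) (hu : uL ≤ uM) (hv : vL ≤ vM)
    (h₁L : b₁M * uL + c₁M * vM ≤ a₁L) (h₁M : a₁M ≤ b₁L * uM + c₁L * vL)
    (h₂L : b₂M * uM + c₂M * vL ≤ a₂L) (h₂M : a₂M ≤ b₂L * uL + c₂L * vM) (t₀ : ℝ) :
    ∃ u v : ℝ → ℝ, ∀ t ∈ Ici t₀,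
      HasDerivWithinAt u (u t * (a₁ t - b₁ t * u t - c₁ t * v t)) (Ici t₀) t ∧
      HasDerivWithinAt v (v t * (a₂ t - b₂ t * u t - c₂ t * v t)) (Ici t₀) t ∧
      u t ∈ Icc uL uM ∧ v t ∈ Icc vL vM := by
  obtain ⟨K, L, hKL⟩ := exists_lipschitzOnWith_lotkaVolterraField ha₁B hb₁B hc₁B ha₂B hb₂B hc₂B
    (isCompact_Icc.prod isCompact_Icc) ((convex_Icc uL uM).prod (convex_Icc vL vM))
  have hp₁ : ∀ t, ∀ v ∈ Icc vL vM, 0 ≤ a₁ t - b₁ t * uL - c₁ t * v := fun t v hv => by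
    linarith [sub_sub_le_sub_sub (ha₁B t).1 (hb₁B t).2 (hc₁B t).2 (hb₁L.trans (hb₁B t).1)
      (hc₁L.trans (hc₁B t).1) huL (hvL.trans hv.1) le_rfl hv.2]
  have hq₁ : ∀ t, ∀ v ∈ Icc vL vM, a₁ t - b₁ t * uM - c₁ t * v ≤ 0 := fun t v hv => by
    linarith [sub_sub_le_sub_sub (ha₁B t).2 (hb₁B t).1 (hc₁B t).1 hb₁L hc₁L (huL.trans hu) hvL
      le_rfl hv.1]
  have hp₂ : ∀ t, ∀ u ∈ Icc uL uM, 0 ≤ a₂ t - b₂ t * u - c₂ t * vL := fun t u hu' => by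
    linarith [sub_sub_le_sub_sub (ha₂B t).1 (hb₂B t).2 (hc₂B t).2 (hb₂L.trans (hb₂B t).1)
      (hc₂L.trans (hc₂B t).1) (huL.trans hu'.1) hvL hu'.2 le_rfl]
  have hq₂ : ∀ t, ∀ u ∈ Icc uL uM, a₂ t - b₂ t * u - c₂ t * vM ≤ 0 := fun t u hu' => by
    linarith [sub_sub_le_sub_sub (ha₂B t).2 (hb₂B t).1 (hc₂B t).1 hb₂L hc₂L huL (hvL.trans hv)
      hu'.1 le_rfl]
  obtain ⟨α, -, hα⟩ := exists_forall_mem_Ici_hasDerivWithinAt_mem_Icc_prod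
    (f := lotkaVolterraField a₁ b₁ c₁ a₂ b₂ c₂) (x₀ := (uL, vL))
    (fun x _ => by unfold lotkaVolterraField; fun_prop) (fun t => (hKL t).1) (fun t => (hKL t).2)
    (fun t v hv => mul_nonneg huL (hp₁ t v hv))
    (fun t v hv => mul_nonpos_of_nonneg_of_nonpos (huL.trans hu) (hq₁ t v hv))
    (fun t u hu' => mul_nonneg hvL (hp₂ t u hu'))
    (fun t u hu' => mul_nonpos_of_nonneg_of_nonpos (hvL.trans hv) (hq₂ t u hu'))
    ⟨left_mem_Icc.2 hu, left_mem_Icc.2 hv⟩ t₀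
  exact ⟨fun t => (α t).1, fun t => (α t).2, fun t ht =>
    ⟨(hα t ht).1.fst, (hα t ht).1.snd, (hα t ht).2⟩⟩

lemma mem_Icc_ciInf_ciSup {ι : Type*} {f : ι → ℝ} (hf : BddAbove (range f))
    (hf₀ : ⨅ i, f i ≠ 0) (i : ι) : f i ∈ Icc (⨅ i, f i) (⨆ i, f i) := by
  -- an infimum over a family that is not bounded below is `0` in `ℝ`
  have hf' : BddBelow (range f) := by
    by_contra h
    exact hf₀ (Real.iInf_of_not_bddBelow h)
  exact ⟨ciInf_le hf' i, le_ciSup hf i⟩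

/-- For the nonautonomous Lotka–Volterra competition system with coefficients
bounded above and below by positive constants and satisfying
`a₁^L > c₁^M a₂^M / c₂^L` and `a₂^L > a₁^M b₂^M / b₁^L`, for every `t₀` there exists a
solution `(u₀, v₀)` on `[t₀, ∞)` whose components stay between the indicated positive
constants. -/
theorem lotka_volterra_exists_bounded_positive_solution
    (a₁ b₁ c₁ a₂ b₂ c₂ : ℝ → ℝ)
    (ha₁ : Continuous a₁) (hb₁ : Continuous b₁) (hc₁ : Continuous c₁)
    (ha₂ : Continuous a₂) (hb₂ : Continuous b₂) (hc₂ : Continuous c₂)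
    (ha₁B : BddAbove (Set.range a₁)) (hb₁B : BddAbove (Set.range b₁))
    (hc₁B : BddAbove (Set.range c₁)) (ha₂B : BddAbove (Set.range a₂))
    (hb₂B : BddAbove (Set.range b₂)) (hc₂B : BddAbove (Set.range c₂))
    (ha₁pos : 0 < ⨅ t, a₁ t) (hb₁pos : 0 < ⨅ t, b₁ t) (hc₁pos : 0 < ⨅ t, c₁ t)
    (ha₂pos : 0 < ⨅ t, a₂ t) (hb₂pos : 0 < ⨅ t, b₂ t) (hc₂pos : 0 < ⨅ t, c₂ t)
    (hcond₁ : (⨆ t, c₁ t) * (⨆ t, a₂ t) / (⨅ t, c₂ t) < ⨅ t, a₁ t)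
    (hcond₂ : (⨆ t, a₁ t) * (⨆ t, b₂ t) / (⨅ t, b₁ t) < ⨅ t, a₂ t)
    (t₀ : ℝ) :
    ∃ u v : ℝ → ℝ,
      (∀ t ∈ Set.Ici t₀,
        HasDerivWithinAt u (u t * (a₁ t - b₁ t * u t - c₁ t * v t)) (Set.Ici t₀) t ∧
        HasDerivWithinAt v (v t * (a₂ t - b₂ t * u t - c₂ t * v t)) (Set.Ici t₀) t) ∧
      0 < ((⨅ s, a₁ s) * (⨅ s, c₂ s) - (⨆ s, c₁ s) * (⨆ s, a₂ s)) /
          ((⨆ s, b₁ s) * (⨅ s, c₂ s) - (⨆ s, c₁ s) * (⨅ s, b₂ s)) ∧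
      0 < ((⨅ s, b₁ s) * (⨅ s, a₂ s) - (⨆ s, a₁ s) * (⨆ s, b₂ s)) /
          ((⨅ s, b₁ s) * (⨆ s, c₂ s) - (⨅ s, c₁ s) * (⨆ s, b₂ s)) ∧
      ∀ t ∈ Set.Ici t₀,
        ((⨅ s, a₁ s) * (⨅ s, c₂ s) - (⨆ s, c₁ s) * (⨆ s, a₂ s)) /
            ((⨆ s, b₁ s) * (⨅ s, c₂ s) - (⨆ s, c₁ s) * (⨅ s, b₂ s)) ≤ u t ∧
        u t ≤ ((⨆ s, a₁ s) * (⨆ s, c₂ s) - (⨅ s, c₁ s) * (⨅ s, a₂ s)) /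
            ((⨅ s, b₁ s) * (⨆ s, c₂ s) - (⨅ s, c₁ s) * (⨆ s, b₂ s)) ∧
        ((⨅ s, b₁ s) * (⨅ s, a₂ s) - (⨆ s, a₁ s) * (⨆ s, b₂ s)) /
            ((⨅ s, b₁ s) * (⨆ s, c₂ s) - (⨅ s, c₁ s) * (⨆ s, b₂ s)) ≤ v t ∧
        v t ≤ ((⨆ s, b₁ s) * (⨆ s, a₂ s) - (⨅ s, a₁ s) * (⨅ s, b₂ s)) /
            ((⨆ s, b₁ s) * (⨅ s, c₂ s) - (⨆ s, c₁ s) * (⨅ s, b₂ s)) := by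
  have hA₁ := mem_Icc_ciInf_ciSup ha₁B ha₁pos.ne'
  have hB₁ := mem_Icc_ciInf_ciSup hb₁B hb₁pos.ne'
  have hC₁ := mem_Icc_ciInf_ciSup hc₁B hc₁pos.ne'
  have hA₂ := mem_Icc_ciInf_ciSup ha₂B ha₂pos.ne'
  have hB₂ := mem_Icc_ciInf_ciSup hb₂B hb₂pos.ne'
  have hC₂ := mem_Icc_ciInf_ciSup hc₂B hc₂pos.ne'
  obtain ⟨huL, hvL, hu, hv, h₁L, h₂M, h₁M, h₂L⟩ := lotkaVolterra_corners
    ha₁pos hb₁pos hc₁pos ha₂pos hb₂pos hc₂pos ((hA₁ 0).1.trans (hA₁ 0).2)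
    ((hB₁ 0).1.trans (hB₁ 0).2) ((hC₁ 0).1.trans (hC₁ 0).2) ((hA₂ 0).1.trans (hA₂ 0).2)
    ((hB₂ 0).1.trans (hB₂ 0).2) ((hC₂ 0).1.trans (hC₂ 0).2) hcond₁ hcond₂ rfl rfl rfl rfl
  obtain ⟨u, v, huv⟩ := lotkaVolterra_exists_solution_mem_Icc ha₁ hb₁ hc₁ ha₂ hb₂ hc₂
    hA₁ hB₁ hC₁ hA₂ hB₂ hC₂ hb₁pos.le hc₁pos.le hb₂pos.le hc₂pos.le huL.le hvL.le hu hv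
    h₁L.le h₁M.ge h₂L.le h₂M.ge t₀
  refine ⟨u, v, fun t ht => ⟨(huv t ht).1, (huv t ht).2.1⟩, huL, hvL, fun t ht => ?_⟩
  obtain ⟨-, -, ⟨hu₁, hu₂⟩, hv₁, hv₂⟩ := huv t ht
  exact ⟨hu₁, hu₂, hv₁, hv₂⟩
end
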